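/- arXiv:2110.14884 — 9 statements merged into one kernel-verified Lean document; each statement's English description precedes it below -/
import Mathlib

section
/- Let g : ℝ → ℝ be differentiable and strongly convex (i.e., g(t) - αt² is convex for some α > 0) with g(0) = 0 = min over ℝ of g. Then the function G(t) := t·g'(t) - g(t) is strictly increasing on (0, ∞). -/
theorem stmt3 (g : ℝ → ℝ) (hdiff : Differentiable ℝ g)
    (hsc : ∃ α > 0, ConvexOn ℝ Set.univ (fun t => g t - α * t ^ 2))
    (h0 : g 0 = 0) (hmin : ∀ t, g 0 ≤ g t) :
    StrictMonoOn (fun t => t * deriv g t - g t) (Set.Ioi 0) := by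
  obtain ⟨α, hα, hconv⟩ := hsc
  have hgconv : ConvexOn ℝ Set.univ g := by
    have := hconv.add ((even_two.convexOn_pow).smul hα.le)
    have heq : ((fun t : ℝ => g t - α * t ^ 2) + fun x : ℝ => α • x ^ 2) = g := by
      funext t; simp [smul_eq_mul]
    rwa [heq] at this
  intro s hs t ht hst
  simp only [Set.mem_Ioi] at hs ht
  -- derivative of h := g - α t² is monotone
  have hh : Differentiable ℝ (fun t : ℝ => g t - α * t ^ 2) :=
    hdiff.sub (by fun_prop)
  have hmono := hconv.monotoneOn_deriv (fun x _ => (hh x))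
  have hderiv : ∀ x : ℝ, deriv (fun t : ℝ => g t - α * t ^ 2) x = deriv g x - 2 * α * x := by
    intro x
    have : HasDerivAt (fun t : ℝ => g t - α * t ^ 2)
        (deriv g x - α * (2 * x)) x := by
      exact ((hdiff x).hasDerivAt).sub (((hasDerivAt_pow 2 x).const_mul α).congr_deriv (by ring))
    rw [this.deriv]; ring
  have hkey : deriv g s - 2 * α * s ≤ deriv g t - 2 * α * t := by
    have := hmono (Set.mem_univ s) (Set.mem_univ t) hst.le
    rwa [hderiv, hderiv] at this
  -- convexity gradient inequality: g t - g s ≤ deriv g t * (t - s)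
  have hslope : slope g s t ≤ deriv g t :=
    hgconv.slope_le_deriv (Set.mem_univ s) (Set.mem_univ t) hst (hdiff t)
  rw [slope_def_field, div_le_iff₀ (by linarith)] at hslope
  simp only
  nlinarith [mul_pos hα (sub_pos.mpr hst), mul_pos hs (sub_pos.mpr hst)]
end

section
/- Let g : ℝ → ℝ be differentiable and strongly convex with g(0) = 0 = min over ℝ of g. Then ĝ(t) := t · g(1/t) is strictly convex on (0, ∞). -/
lemma strictConvexOn_smul_aux {s : Set ℝ} {f : ℝ → ℝ} {c : ℝ} (hc : 0 < c)
    (hf : StrictConvexOn ℝ s f) : StrictConvexOn ℝ s (fun x => c * f x) := by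
  refine ⟨hf.1, fun x hx y hy hxy a b ha hb hab => ?_⟩
  have := hf.2 hx hy hxy ha hb hab
  have h2 := mul_lt_mul_of_pos_left this hc
  simpa [mul_add, smul_eq_mul] using h2.trans_le (le_of_eq (by simp [smul_eq_mul]; ring))

theorem stmt5 (g : ℝ → ℝ) (hdiff : Differentiable ℝ g)
    (hsc : ∃ α > 0, ConvexOn ℝ Set.univ (fun t => g t - α * t ^ 2))
    (h0 : g 0 = 0) (hmin : ∀ t, g 0 ≤ g t) :
    StrictConvexOn ℝ (Set.Ioi 0) (fun t => t * g (1 / t)) := by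
  obtain ⟨α, hα, hconv⟩ := hsc
  -- g is strictly convex on univ
  have hq : StrictConvexOn ℝ Set.univ (fun t : ℝ => α * t ^ 2) :=
    strictConvexOn_smul_aux hα (Even.strictConvexOn_pow (by norm_num) (by norm_num))
  have hgsc : StrictConvexOn ℝ Set.univ g := by
    have := hconv.add_strictConvexOn hq
    have heq : (fun t => g t - α * t ^ 2) + (fun t : ℝ => α * t ^ 2) = g := by
      funext t; simp
    rwa [heq] at this
  have hgconv : ConvexOn ℝ Set.univ g := hgsc.convexOn
  -- deriv g is strictly monotone
  have hderivmono : StrictMono (deriv g) := by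
    have := hgsc.strictMonoOn_deriv (fun x _ => hdiff x)
    intro x y hxy
    exact this (Set.mem_univ x) (Set.mem_univ y) hxy
  -- derivative of ĝ
  have hDeriv : ∀ t : ℝ, 0 < t →
      HasDerivAt (fun x => x * g (1 / x)) (g (1 / t) - deriv g (1 / t) / t) t := by
    intro t ht
    have h1 : HasDerivAt (fun x : ℝ => 1 / x) (-(1 / t ^ 2)) t := by
      simpa [one_div] using hasDerivAt_inv ht.ne'
    have h2 : HasDerivAt g (deriv g (1 / t)) (1 / t) := (hdiff (1 / t)).hasDerivAt
    have h3 : HasDerivAt (fun x => g (1 / x)) (deriv g (1 / t) * -(1 / t ^ 2)) t :=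
      h2.comp t h1
    have h4 := (hasDerivAt_id t).mul h3
    have heq : 1 * g (1 / t) + t * (deriv g (1 / t) * -(1 / t ^ 2)) =
        g (1 / t) - deriv g (1 / t) / t := by
      field_simp; ring
    exact h4.congr_deriv heq
  -- ĝ' is strictly monotone on Ioi 0
  have hmono : StrictMonoOn (deriv fun x => x * g (1 / x)) (Set.Ioi 0) := by
    intro s hs t ht hst
    have hs' : (0 : ℝ) < s := hs
    have ht' : (0 : ℝ) < t := ht
    rw [(hDeriv s hs').deriv, (hDeriv t ht').deriv]
    set a := 1 / t with ha
    set b := 1 / s with hb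
    have hapos : 0 < a := by positivity
    have hab : a < b := by
      apply one_div_lt_one_div_of_lt hs' hst
    -- g b - g a ≤ deriv g b * (b - a)
    have hslope : (g b - g a) / (b - a) ≤ deriv g b := by
      have := hgconv.slope_le_deriv (Set.mem_univ a) (Set.mem_univ b) hab (hdiff b)
      rwa [slope_def_field] at this
    have hba : 0 < b - a := sub_pos.2 hab
    have hslope' : g b - g a ≤ deriv g b * (b - a) := by
      rw [div_le_iff₀ hba] at hslope
      linarith
    have hdg : deriv g a < deriv g b := hderivmono hab
    -- target: g b - deriv g b / s < g a - deriv g a / t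
    have hs1 : 1 / s = b := rfl
    have ht1 : 1 / t = a := rfl
    have hsinv : deriv g b / s = b * deriv g b * s / s := by
      rw [hb]; field_simp
    have htinv : deriv g a / t = a * deriv g a * t / t := by
      rw [ha]; field_simp
    have h5 : deriv g b / s = b * deriv g b := by
      rw [hsinv, mul_div_assoc, div_self hs'.ne', mul_one]
    have h6 : deriv g a / t = a * deriv g a := by
      rw [htinv, mul_div_assoc, div_self ht'.ne', mul_one]
    rw [h5, h6]
    -- need: g b - b * deriv g b < g a - a * deriv g a
    nlinarith [mul_pos hapos (sub_pos.2 hdg)]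
  -- continuity
  have hcont : ContinuousOn (fun x : ℝ => x * g (1 / x)) (Set.Ioi 0) := by
    apply ContinuousOn.mul continuousOn_id
    exact hdiff.continuous.comp_continuousOn
      (continuousOn_const.div continuousOn_id (fun x hx => ne_of_gt hx))
  have := StrictMonoOn.strictConvexOn_of_deriv (convex_Ioi 0) hcont
    (by rwa [interior_Ioi])
  exact this
end

section
/- Let f : ℝⁿ → ℝ be convex and positively homogeneous of degree 1 with f(0) = 0, and let Q = {(t, x, z) ∈ ℝ × ℝⁿ × {0,1}ⁿ : t ≥ f(x), xᵢ(1 - zᵢ) = 0 for all i}. Then the closure of the convex hull of Q equals X × [0,1]ⁿ, where X = {(t, x) : t ≥ f(x)}. -/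
theorem stmt8 (n : ℕ) (f : (Fin n → ℝ) → ℝ) (hconv : ConvexOn ℝ Set.univ f)
    (hhom : ∀ c : ℝ, 0 ≤ c → ∀ x, f (c • x) = c * f x) (h0 : f 0 = 0) :
    closure (convexHull ℝ {p : ℝ × (Fin n → ℝ) × (Fin n → ℝ) |
        f p.2.1 ≤ p.1 ∧ (∀ i, p.2.2 i = 0 ∨ p.2.2 i = 1) ∧
        ∀ i, p.2.1 i * (1 - p.2.2 i) = 0}) =
      {p : ℝ × (Fin n → ℝ) × (Fin n → ℝ) |
        f p.2.1 ≤ p.1 ∧ ∀ i, p.2.2 i ∈ Set.Icc (0 : ℝ) 1} := by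
  set Q : Set (ℝ × (Fin n → ℝ) × (Fin n → ℝ)) :=
    {p | f p.2.1 ≤ p.1 ∧ (∀ i, p.2.2 i = 0 ∨ p.2.2 i = 1) ∧
      ∀ i, p.2.1 i * (1 - p.2.2 i) = 0} with hQ
  set S : Set (ℝ × (Fin n → ℝ) × (Fin n → ℝ)) :=
    {p | f p.2.1 ≤ p.1 ∧ ∀ i, p.2.2 i ∈ Set.Icc (0 : ℝ) 1} with hS
  have hf_cont : Continuous f := by
    rw [← continuousOn_univ]
    exact hconv.continuousOn isOpen_univ
  have hSconv : Convex ℝ S := by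
    intro p hp q hq a b ha hb hab
    refine ⟨?_, fun i => ?_⟩
    · have h1 : f (a • p.2.1 + b • q.2.1) ≤ a * f p.2.1 + b * f q.2.1 :=
        hconv.2 (Set.mem_univ p.2.1) (Set.mem_univ q.2.1) ha hb hab
      have h2 : a * f p.2.1 + b * f q.2.1 ≤ a * p.1 + b * q.1 := by
        have := hp.1; have := hq.1
        nlinarith
      exact le_trans h1 h2
    · exact (convex_Icc (0:ℝ) 1) (hp.2 i) (hq.2 i) ha hb hab
  have hSclosed : IsClosed S := by
    have h1 : IsClosed {p : ℝ × (Fin n → ℝ) × (Fin n → ℝ) | f p.2.1 ≤ p.1} :=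
      isClosed_le (hf_cont.comp (continuous_fst.comp continuous_snd)) continuous_fst
    have h2 : IsClosed {p : ℝ × (Fin n → ℝ) × (Fin n → ℝ) | ∀ i, p.2.2 i ∈ Set.Icc (0:ℝ) 1} := by
      have : {p : ℝ × (Fin n → ℝ) × (Fin n → ℝ) | ∀ i, p.2.2 i ∈ Set.Icc (0:ℝ) 1}
          = ⋂ i, {p : ℝ × (Fin n → ℝ) × (Fin n → ℝ) | p.2.2 i ∈ Set.Icc (0:ℝ) 1} := by
        ext p; simp
      rw [this]
      refine isClosed_iInter fun i => ?_
      exact IsClosed.preimage ((continuous_apply i).comp (continuous_snd.comp continuous_snd))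
        isClosed_Icc
    have : S = {p : ℝ × (Fin n → ℝ) × (Fin n → ℝ) | f p.2.1 ≤ p.1} ∩
        {p : ℝ × (Fin n → ℝ) × (Fin n → ℝ) | ∀ i, p.2.2 i ∈ Set.Icc (0:ℝ) 1} := by
      ext p; simp [hS, Set.mem_setOf_eq]
    rw [this]; exact h1.inter h2
  have hQS : Q ⊆ S := by
    rintro p ⟨h1, h2, _⟩
    refine ⟨h1, fun i => ?_⟩
    rcases h2 i with h | h <;> rw [h] <;> constructor <;> norm_num
  -- the cube points
  have hcube : ∀ z : Fin n → ℝ, (∀ i, z i ∈ Set.Icc (0:ℝ) 1) →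
      ((0:ℝ), (0:Fin n → ℝ), z) ∈ convexHull ℝ Q := by
    intro z hz
    have hzmem : z ∈ convexHull ℝ (Set.pi Set.univ fun _ : Fin n => ({0, 1} : Set ℝ)) := by
      refine mem_convexHull_pi fun i _ => ?_
      rw [convexHull_pair, segment_eq_Icc (by norm_num : (0:ℝ) ≤ 1)]
      exact hz i
    have hlin : IsLinearMap ℝ (fun w : Fin n → ℝ => ((0:ℝ), (0:Fin n → ℝ), w)) := by
      constructor <;> intros <;> simp [Prod.ext_iff]
    have himg := hlin.image_convexHull (Set.pi Set.univ fun _ : Fin n => ({0, 1} : Set ℝ))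
    have hmem : ((0:ℝ), (0:Fin n → ℝ), z) ∈
        (fun w : Fin n → ℝ => ((0:ℝ), (0:Fin n → ℝ), w)) '' convexHull ℝ
          (Set.pi Set.univ fun _ : Fin n => ({0, 1} : Set ℝ)) := ⟨z, hzmem, rfl⟩
    rw [himg] at hmem
    refine convexHull_mono ?_ hmem
    rintro p ⟨w, hw, rfl⟩
    refine ⟨by simp [h0], fun i => ?_, fun i => by simp⟩
    simpa using hw i (Set.mem_univ i)

  apply Set.Subset.antisymm
  · exact closure_minimal (convexHull_min hQS hSconv) hSclosed
  · rintro ⟨t, x, z⟩ ⟨hft, hzI⟩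
    have key : ∀ k : ℕ, (t, x, (((k:ℝ)+1)⁻¹) • (1 : Fin n → ℝ)
        + (1 - ((k:ℝ)+1)⁻¹) • z) ∈ convexHull ℝ Q := by
      intro k
      set c : ℝ := ((k:ℝ)+1)⁻¹ with hc
      have hk1 : (0:ℝ) < (k:ℝ)+1 := by positivity
      have hcpos : 0 < c := by positivity
      have hc1 : c ≤ 1 := by
        rw [hc]; rw [inv_le_one_iff₀]; right; linarith
      have ha : (((k:ℝ)+1) * t, ((k:ℝ)+1) • x, (1 : Fin n → ℝ)) ∈ Q := by
        refine ⟨?_, fun i => Or.inr rfl, fun i => by simp⟩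
        rw [hhom ((k:ℝ)+1) hk1.le x]
        exact mul_le_mul_of_nonneg_left hft hk1.le
      have hb : ((0:ℝ), (0:Fin n → ℝ), z) ∈ convexHull ℝ Q := hcube z hzI
      have hck : c * ((k:ℝ)+1) = 1 := inv_mul_cancel₀ (ne_of_gt hk1)
      have heq : c • (((k:ℝ)+1) * t, ((k:ℝ)+1) • x, (1 : Fin n → ℝ))
          + (1 - c) • ((0:ℝ), (0:Fin n → ℝ), z)
          = (t, x, c • (1 : Fin n → ℝ) + (1 - c) • z) := by
        refine Prod.ext ?_ (Prod.ext ?_ ?_)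
        · show c * (((k:ℝ)+1) * t) + (1 - c) * 0 = t
          rw [← mul_assoc, hck]; ring
        · show c • (((k:ℝ)+1) • x) + (1 - c) • (0 : Fin n → ℝ) = x
          rw [smul_smul, hck, one_smul, smul_zero, add_zero]
        · rfl
      rw [← heq]
      exact (convex_convexHull ℝ Q) (subset_convexHull ℝ Q ha) hb hcpos.le
        (by linarith) (by ring)
    have htend : Filter.Tendsto
        (fun k : ℕ => ((t, x, (((k:ℝ)+1)⁻¹) • (1 : Fin n → ℝ) + (1 - ((k:ℝ)+1)⁻¹) • z) :
          ℝ × (Fin n → ℝ) × (Fin n → ℝ)))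
        Filter.atTop (nhds (t, x, z)) := by
      have h1 : Filter.Tendsto (fun k : ℕ => ((k:ℝ)+1)⁻¹) Filter.atTop (nhds 0) :=
        tendsto_one_div_add_atTop_nhds_zero_nat.congr (by intro k; rw [one_div])
      have h3 : Filter.Tendsto (fun k : ℕ => (((k:ℝ)+1)⁻¹) • (1 : Fin n → ℝ)
          + (1 - ((k:ℝ)+1)⁻¹) • z) Filter.atTop (nhds z) := by
        have ha := h1.smul_const (1 : Fin n → ℝ)
        have hb := (((tendsto_const_nhds :
            Filter.Tendsto (fun _ : ℕ => (1:ℝ)) Filter.atTop (nhds 1)).sub h1).smul_const z)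
        have hab := ha.add hb
        simpa using hab
      exact tendsto_const_nhds.prodMk_nhds (tendsto_const_nhds.prodMk_nhds h3)
    exact mem_closure_of_tendsto htend (Filter.Eventually.of_forall key)
end

section
/- Let g : ℝ → ℝ be convex with g(0) = 0, a ∈ ℝⁿ with aᵢ ≠ 0 for all i, and let Q₁ = {(t, x, z) ∈ ℝ × ℝⁿ × {0,1}ⁿ : t ≥ g(aᵀx), xᵢ(1 - zᵢ) = 0 ∀i}. Then the closed convex hull of Q₁ equals {(t, x, z) : t ≥ g^π(aᵀx, min{1, ∑ᵢ zᵢ}), 0 ≤ z ≤ 1}, where g^π(v, λ) = λ g(v/λ) for λ > 0 and g^π(v, 0) is the recession function of g at v. -/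
/-- The (closed) perspective function `g^π(v, l) = l * g (v / l)` for `l > 0`,
with `g^π(v, 0)` given by the recession function of `g` at `v`
(for convex `g` with `g 0 = 0` this equals `sup_{r > 0} g (r * v) / r`). -/
noncomputable def persp (g : ℝ → ℝ) (v l : ℝ) : EReal :=
  if 0 < l then ((l * g (v / l) : ℝ) : EReal)
  else ⨆ (r : ℝ) (_ : 0 < r), ((g (r * v) / r : ℝ) : EReal)

/-- tangent line to a convex function on ℝ -/
lemma exists_tangent (g : ℝ → ℝ) (hg : ConvexOn ℝ Set.univ g) (x0 : ℝ) :
    ∃ α β : ℝ, (∀ x, α * x + β ≤ g x) ∧ α * x0 + β = g x0 := by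
  set A : Set ℝ := (fun y => (g x0 - g y) / (x0 - y)) '' Set.Iio x0 with hA
  have hne : A.Nonempty := ⟨_, ⟨x0 - 1, by simp, rfl⟩⟩
  have hbdd : BddAbove A := by
    refine ⟨(g (x0 + 1) - g x0) / 1, ?_⟩
    rintro s ⟨y, hy, rfl⟩
    have := hg.slope_mono_adjacent (Set.mem_univ y) (Set.mem_univ (x0 + 1)) hy (by linarith)
    simpa using this
  set α := sSup A with hα
  have h1 : ∀ y < x0, (g x0 - g y) / (x0 - y) ≤ α := fun y hy =>
    le_csSup hbdd ⟨y, hy, rfl⟩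
  have h2 : ∀ u, x0 < u → α ≤ (g u - g x0) / (u - x0) := by
    intro u hu
    refine csSup_le hne ?_
    rintro s ⟨y, hy, rfl⟩
    exact hg.slope_mono_adjacent (Set.mem_univ y) (Set.mem_univ u) hy hu
  refine ⟨α, g x0 - α * x0, ?_, by ring⟩
  intro x
  rcases lt_trichotomy x x0 with h | h | h
  · have := h1 x h
    rw [div_le_iff₀ (by linarith)] at this
    nlinarith
  · subst h; linarith
  · have := h2 x h
    rw [le_div_iff₀ (by linarith)] at this
    nlinarith

lemma persp_le_iff (g : ℝ → ℝ) (hg : ConvexOn ℝ Set.univ g) (h0 : g 0 = 0)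
    (v l t : ℝ) (hl : 0 ≤ l) :
    persp g v l ≤ (t : EReal) ↔
      ∀ α β : ℝ, (∀ x, α * x + β ≤ g x) → α * v + β * l ≤ t := by
  unfold persp
  rcases lt_or_eq_of_le hl with hl0 | hl0
  · rw [if_pos hl0, EReal.coe_le_coe_iff]
    constructor
    · intro h α β hmin
      have h1 : α * (v / l) + β ≤ g (v / l) := hmin _
      have : l * (α * (v / l) + β) ≤ l * g (v / l) := by
        exact mul_le_mul_of_nonneg_left h1 hl0.le
      calc α * v + β * l = l * (α * (v / l) + β) := by field_simp <;> ring
        _ ≤ l * g (v / l) := this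
        _ ≤ t := h
    · intro h
      obtain ⟨α, β, hmin, heq⟩ := exists_tangent g hg (v / l)
      have := h α β hmin
      calc l * g (v / l) = α * v + β * l := by rw [← heq]; field_simp <;> ring
        _ ≤ t := this
  · rw [if_neg (by rw [← hl0]; exact lt_irrefl 0), ← hl0]
    rw [iSup_le_iff]
    constructor
    · intro h α β hmin
      have hβ : β ≤ 0 := by have := hmin 0; rw [h0] at this; linarith
      have key : ∀ r : ℝ, 0 < r → g (r * v) / r ≤ t := by
        intro r hr
        have := h r
        rw [iSup_le_iff] at this
        exact EReal.coe_le_coe_iff.1 (this hr)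
      have : ∀ ε : ℝ, 0 < ε → α * v ≤ t + ε := by
        intro ε hε
        set r := max 1 (-β / ε) with hr
        have hr0 : 0 < r := lt_of_lt_of_le one_pos (le_max_left _ _)
        have h1 : α * (r * v) + β ≤ g (r * v) := hmin _
        have h2 : g (r * v) / r ≤ t := key r hr0
        have hcan : β / r * r = β := div_mul_cancel₀ β (ne_of_gt hr0)
        have h3 : α * v + β / r ≤ g (r * v) / r := by
          rw [le_div_iff₀ hr0]; nlinarith [h1, hcan]
        have h4 : -β / r ≤ ε := by
          rw [div_le_iff₀ hr0]
          rcases le_or_gt (-β) ε with h | h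
          · have h1r : (1:ℝ) ≤ r := le_max_left _ _
            nlinarith [hε, h1r]
          · have : -β / ε ≤ r := le_max_right _ _
            rw [div_le_iff₀ hε] at this
            nlinarith
        have h5 : -β / r = -(β / r) := neg_div r β
        linarith [h2, h3, h4, h5]
      have : α * v ≤ t := by
        by_contra hc
        push_neg at hc
        have := this ((α * v - t) / 2) (by linarith)
        linarith
      linarith [mul_nonpos_of_nonpos_of_nonneg
        (show β ≤ 0 by have := hmin 0; rw [h0] at this; linarith) (le_refl (0:ℝ))]
    · intro h r
      rw [iSup_le_iff]
      intro hr
      rw [EReal.coe_le_coe_iff]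
      obtain ⟨α, β, hmin, heq⟩ := exists_tangent g hg (r * v)
      have hβ : β ≤ 0 := by have := hmin 0; rw [h0] at this; linarith
      have hαv := h α β hmin
      rw [mul_zero] at hαv
      calc g (r * v) / r = α * v + β / r := by rw [← heq]; field_simp
        _ ≤ α * v + 0 := by
            have : β / r ≤ 0 := div_nonpos_of_nonpos_of_nonneg hβ hr.le
            linarith
        _ ≤ t := by linarith

section main
open Topology Filter
variable {n : ℕ} (g : ℝ → ℝ) (a : Fin n → ℝ)

def Qset : Set (ℝ × (Fin n → ℝ) × (Fin n → ℝ)) :=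
  {p | g (∑ i, a i * p.2.1 i) ≤ p.1 ∧ (∀ i, p.2.2 i = 0 ∨ p.2.2 i = 1) ∧
    ∀ i, p.2.1 i * (1 - p.2.2 i) = 0}

def Sset : Set (ℝ × (Fin n → ℝ) × (Fin n → ℝ)) :=
  {p | persp g (∑ i, a i * p.2.1 i) (min 1 (∑ i, p.2.2 i)) ≤ (p.1 : EReal) ∧
    ∀ i, p.2.2 i ∈ Set.Icc (0 : ℝ) 1}

lemma Sset_eq (hg : ConvexOn ℝ Set.univ g) (h0 : g 0 = 0) :
    Sset g a = {p : ℝ × (Fin n → ℝ) × (Fin n → ℝ) | ∀ i, p.2.2 i ∈ Set.Icc (0 : ℝ) 1} ∩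
      ⋂ (q : ℝ × ℝ) (_ : ∀ x, q.1 * x + q.2 ≤ g x),
        {p : ℝ × (Fin n → ℝ) × (Fin n → ℝ) |
          q.1 * (∑ i, a i * p.2.1 i) + q.2 * min 1 (∑ i, p.2.2 i) ≤ p.1} := by
  ext p
  simp only [Sset, Set.mem_setOf_eq, Set.mem_inter_iff, Set.mem_iInter]
  constructor
  · rintro ⟨h1, h2⟩
    refine ⟨h2, fun q hq => ?_⟩
    have hl : (0:ℝ) ≤ min 1 (∑ i, p.2.2 i) :=
      le_min one_pos.le (Finset.sum_nonneg fun i _ => (h2 i).1)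
    exact (persp_le_iff g hg h0 _ _ _ hl).1 h1 q.1 q.2 hq
  · rintro ⟨h2, h1⟩
    refine ⟨?_, h2⟩
    have hl : (0:ℝ) ≤ min 1 (∑ i, p.2.2 i) :=
      le_min one_pos.le (Finset.sum_nonneg fun i _ => (h2 i).1)
    exact (persp_le_iff g hg h0 _ _ _ hl).2 fun α β hq => h1 (α, β) hq

lemma Sset_closed (hg : ConvexOn ℝ Set.univ g) (h0 : g 0 = 0) : IsClosed (Sset g a) := by
  rw [Sset_eq g a hg h0]
  apply IsClosed.inter
  · have : {p : ℝ × (Fin n → ℝ) × (Fin n → ℝ) | ∀ i, p.2.2 i ∈ Set.Icc (0 : ℝ) 1}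
        = ⋂ i, (fun p : ℝ × (Fin n → ℝ) × (Fin n → ℝ) => p.2.2 i) ⁻¹' Set.Icc (0:ℝ) 1 := by
      ext p; simp
    rw [this]
    exact isClosed_iInter fun i =>
      (isClosed_Icc).preimage ((continuous_apply i).comp (continuous_snd.comp continuous_snd))
  · refine isClosed_iInter fun q => isClosed_iInter fun _ => isClosed_le ?_ continuous_fst
    apply Continuous.add
    · exact continuous_const.mul (continuous_finset_sum _ fun i _ =>
        continuous_const.mul ((continuous_apply i).comp (continuous_fst.comp continuous_snd)))
    · exact continuous_const.mul (continuous_const.min (continuous_finset_sum _ fun i _ =>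
        (continuous_apply i).comp (continuous_snd.comp continuous_snd)))

lemma Sset_convex (hg : ConvexOn ℝ Set.univ g) (h0 : g 0 = 0) : Convex ℝ (Sset g a) := by
  rw [Sset_eq g a hg h0]
  apply Convex.inter
  · intro p hp q hq c d hc hd hcd
    simp only [Set.mem_setOf_eq] at *
    intro i
    have h1 := hp i
    have h2 := hq i
    simp only [Set.mem_Icc] at *
    constructor
    · have : (c • p + d • q).2.2 i = c * p.2.2 i + d * q.2.2 i := rfl
      rw [this]; nlinarith [h1.1, h2.1]
    · have : (c • p + d • q).2.2 i = c * p.2.2 i + d * q.2.2 i := rfl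
      rw [this]; nlinarith [h1.2, h2.2]
  · refine convex_iInter fun q => convex_iInter fun hq => ?_
    have hβ : q.2 ≤ 0 := by have := hq 0; rw [mul_zero, zero_add, h0] at this; exact this
    intro p hp r hr c d hc hd hcd
    simp only [Set.mem_setOf_eq] at *
    have e1 : (c • p + d • r).1 = c * p.1 + d * r.1 := rfl
    have e2 : ∀ i, (c • p + d • r).2.1 i = c * p.2.1 i + d * r.2.1 i := fun i => rfl
    have e3 : ∀ i, (c • p + d • r).2.2 i = c * p.2.2 i + d * r.2.2 i := fun i => rfl
    rw [e1]
    have hs1 : (∑ i, a i * (c • p + d • r).2.1 i)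
        = c * (∑ i, a i * p.2.1 i) + d * (∑ i, a i * r.2.1 i) := by
      rw [Finset.mul_sum, Finset.mul_sum, ← Finset.sum_add_distrib]
      apply Finset.sum_congr rfl; intro i _; rw [e2 i]; ring
    have hs2 : (∑ i, (c • p + d • r).2.2 i)
        = c * (∑ i, p.2.2 i) + d * (∑ i, r.2.2 i) := by
      rw [Finset.mul_sum, Finset.mul_sum, ← Finset.sum_add_distrib]
      apply Finset.sum_congr rfl; intro i _; rw [e3 i]
    rw [hs1, hs2]
    have hmin : c * min 1 (∑ i, p.2.2 i) + d * min 1 (∑ i, r.2.2 i)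
        ≤ min 1 (c * (∑ i, p.2.2 i) + d * (∑ i, r.2.2 i)) := by
      apply le_min
      · nlinarith [min_le_left (1:ℝ) (∑ i, p.2.2 i), min_le_left (1:ℝ) (∑ i, r.2.2 i)]
      · nlinarith [min_le_right (1:ℝ) (∑ i, p.2.2 i), min_le_right (1:ℝ) (∑ i, r.2.2 i)]
    nlinarith [hp, hr, mul_le_mul_of_nonpos_left hmin hβ]

lemma Qsub (hg : ConvexOn ℝ Set.univ g) (h0 : g 0 = 0) : Qset g a ⊆ Sset g a := by
  rintro p ⟨hgle, hbin, hsupp⟩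
  have hbox : ∀ i, p.2.2 i ∈ Set.Icc (0:ℝ) 1 := by
    intro i; rcases hbin i with h | h <;> rw [h] <;> simp
  refine ⟨?_, hbox⟩
  have hl : (0:ℝ) ≤ min 1 (∑ i, p.2.2 i) :=
    le_min one_pos.le (Finset.sum_nonneg fun i _ => (hbox i).1)
  rw [persp_le_iff g hg h0 _ _ _ hl]
  intro α β hmin
  by_cases hz : ∃ i, p.2.2 i = 1
  · obtain ⟨i0, hi0⟩ := hz
    have h1 : (1:ℝ) ≤ ∑ i, p.2.2 i := by
      calc (1:ℝ) = p.2.2 i0 := hi0.symm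
        _ ≤ ∑ i, p.2.2 i := Finset.single_le_sum (fun i _ => (hbox i).1) (Finset.mem_univ i0)
    rw [min_eq_left h1, mul_one]
    exact le_trans (hmin _) hgle
  · push_neg at hz
    have hz0 : ∀ i, p.2.2 i = 0 := by
      intro i; rcases hbin i with h | h; exact h; exact absurd h (hz i)
    have hx0 : ∀ i, p.2.1 i = 0 := by
      intro i; have := hsupp i; rw [hz0 i] at this; simpa using this
    have hv : (∑ i, a i * p.2.1 i) = 0 := by
      apply Finset.sum_eq_zero; intro i _; rw [hx0 i, mul_zero]
    have hs : (∑ i, p.2.2 i) = 0 := Finset.sum_eq_zero fun i _ => hz0 i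
    rw [hv, hs, mul_zero, min_eq_right zero_le_one]
    rw [hv, h0] at hgle
    simp only [mul_zero]
    linarith

lemma cost_bound (hg : ConvexOn ℝ Set.univ g) (h0 : g 0 = 0)
    {p : ℝ × (Fin n → ℝ) × (Fin n → ℝ)} (hp : p ∈ Sset g a) {W : ℝ} (hW : 0 < W)
    (hW2 : min 1 (∑ i, p.2.2 i) ≤ W) :
    W * g ((∑ i, a i * p.2.1 i) / W) ≤ p.1 := by
  obtain ⟨h1, hbox⟩ := hp
  have hl : (0:ℝ) ≤ min 1 (∑ i, p.2.2 i) :=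
    le_min one_pos.le (Finset.sum_nonneg fun i _ => (hbox i).1)
  rw [persp_le_iff g hg h0 _ _ _ hl] at h1
  obtain ⟨α, β, hmin, heq⟩ := exists_tangent g hg ((∑ i, a i * p.2.1 i) / W)
  have hβ : β ≤ 0 := by have := hmin 0; rw [h0] at this; linarith
  have key := h1 α β hmin
  have h2 : β * W ≤ β * min 1 (∑ i, p.2.2 i) := mul_le_mul_of_nonpos_left hW2 hβ
  calc W * g ((∑ i, a i * p.2.1 i) / W) = α * (∑ i, a i * p.2.1 i) + β * W := by
        rw [← heq]; field_simp <;> ring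
    _ ≤ α * (∑ i, a i * p.2.1 i) + β * min 1 (∑ i, p.2.2 i) := by linarith
    _ ≤ p.1 := key

lemma closure_mem_aux (t : ℝ) (x z : Fin n → ℝ)
    (h : ∀ θ : ℝ, 0 < θ → θ < 1 →
      ((t, x, fun i => (1-θ) * z i + θ) : ℝ × (Fin n → ℝ) × (Fin n → ℝ))
        ∈ convexHull ℝ (Qset g a)) :
    ((t, x, z) : ℝ × (Fin n → ℝ) × (Fin n → ℝ)) ∈ closure (convexHull ℝ (Qset g a)) := by
  have hseq : Filter.Tendsto (fun k : ℕ => (1:ℝ)/(k+2)) Filter.atTop (𝓝 0) := by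
    simp only [one_div]
    apply Filter.Tendsto.comp tendsto_inv_atTop_zero
    apply Filter.tendsto_atTop_add_const_right
    exact tendsto_natCast_atTop_atTop
  have hf : Continuous (fun θ : ℝ =>
      ((t, x, fun i => (1-θ) * z i + θ) : ℝ × (Fin n → ℝ) × (Fin n → ℝ))) := by
    apply Continuous.prodMk continuous_const
    apply Continuous.prodMk continuous_const
    apply continuous_pi
    intro i
    exact ((continuous_const.sub continuous_id).mul continuous_const).add continuous_id
  have h1 : Filter.Tendsto
      (fun k : ℕ => ((t, x, fun i => (1-(1:ℝ)/(k+2)) * z i + (1:ℝ)/(k+2)) :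
        ℝ × (Fin n → ℝ) × (Fin n → ℝ))) Filter.atTop
      (𝓝 ((t, x, fun i => (1-(0:ℝ)) * z i + 0) : ℝ × (Fin n → ℝ) × (Fin n → ℝ))) :=
    (hf.tendsto 0).comp hseq
  have h2 : ((t, x, fun i => (1-(0:ℝ)) * z i + 0) : ℝ × (Fin n → ℝ) × (Fin n → ℝ))
      = (t, x, z) := by
    refine Prod.ext rfl (Prod.ext rfl ?_)
    funext i; simp
  rw [h2] at h1
  refine mem_closure_of_tendsto h1 ?_
  filter_upwards with k
  apply h
  · positivity
  · rw [div_lt_one (by positivity)]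
    have : (0:ℝ) ≤ (k:ℝ) := Nat.cast_nonneg k
    linarith

lemma binary_mem (hg : ConvexOn ℝ Set.univ g) (h0 : g 0 = 0) (ha : ∀ i, a i ≠ 0)
    (z : Fin n → ℝ) (hbin : ∀ i, z i = 0 ∨ z i = 1) (hsum : 1 ≤ ∑ i, z i)
    (t : ℝ) (x : Fin n → ℝ) (ht : g (∑ i, a i * x i) ≤ t) :
    ((t, x, z) : ℝ × (Fin n → ℝ) × (Fin n → ℝ)) ∈ closure (convexHull ℝ (Qset g a)) := by
  set v := ∑ i, a i * x i with hv
  have hz1 : ∃ i0, z i0 = 1 := by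
    by_contra hc
    push_neg at hc
    have : ∀ i, z i = 0 := fun i => (hbin i).resolve_right (hc i)
    rw [Finset.sum_eq_zero (fun i _ => this i)] at hsum
    linarith
  obtain ⟨i0, hi0⟩ := hz1
  apply closure_mem_aux
  intro θ hθ0 hθ1
  set x' : Fin n → ℝ := fun j => if j = i0 then v / a i0 else 0 with hx'
  have hsum' : (∑ j, a j * x' j) = v := by
    rw [hx']
    rw [Finset.sum_eq_single i0]
    · show a i0 * (if i0 = i0 then v / a i0 else 0) = v
      rw [if_pos rfl, mul_comm, div_mul_cancel₀ v (ha i0)]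
    · intro j _ hj; simp [if_neg hj]
    · intro h; exact absurd (Finset.mem_univ i0) h
  have hA : ((g v, x', z) : ℝ × (Fin n → ℝ) × (Fin n → ℝ)) ∈ Qset g a := by
    refine ⟨by rw [hsum'], hbin, ?_⟩
    intro j
    show x' j * (1 - z j) = 0
    by_cases hj : j = i0
    · subst hj; rw [hi0]; ring
    · simp [hx', if_neg hj]
  set xF : Fin n → ℝ := fun j => (x j - (1-θ) * x' j)/θ with hxF
  have hsumF : (∑ j, a j * xF j) = v := by
    rw [hxF]
    have : ∀ j, a j * ((x j - (1-θ) * x' j)/θ) = (a j * x j - (1-θ) * (a j * x' j))/θ := by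
      intro j; field_simp
    rw [Finset.sum_congr rfl (fun j _ => this j), ← Finset.sum_div, Finset.sum_sub_distrib,
      ← Finset.mul_sum, hsum', ← hv]
    field_simp
    ring
  have hF : ((g v + (t - g v)/θ, xF, fun _ => (1:ℝ)) : ℝ × (Fin n → ℝ) × (Fin n → ℝ))
      ∈ Qset g a := by
    refine ⟨?_, fun i => Or.inr rfl, fun i => by ring⟩
    rw [hsumF]
    have : (0:ℝ) ≤ (t - g v)/θ := div_nonneg (by linarith) hθ0.le
    linarith
  have hcomb := (convex_convexHull ℝ (Qset g a))
    (subset_convexHull ℝ _ hA) (subset_convexHull ℝ _ hF)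
    (by linarith : (0:ℝ) ≤ 1 - θ) hθ0.le (by ring)
  convert hcomb using 1
  refine Prod.ext ?_ (Prod.ext ?_ ?_)
  · show t = (1-θ) * g v + θ * (g v + (t - g v)/θ)
    field_simp
    ring
  · show x = fun j => (1-θ) * x' j + θ * xF j
    funext j
    show x j = (1-θ) * x' j + θ * ((x j - (1-θ) * x' j)/θ)
    field_simp
    ring
  · show (fun i => (1-θ) * z i + θ) = fun i => (1-θ) * z i + θ * 1
    funext i; ring_nf

lemma sum_one_mem (hg : ConvexOn ℝ Set.univ g) (h0 : g 0 = 0) (ha : ∀ i, a i ≠ 0)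
    (z : Fin n → ℝ) (hbox : ∀ i, z i ∈ Set.Icc (0:ℝ) 1) (hsum : ∑ i, z i = 1)
    (t : ℝ) (x : Fin n → ℝ) (ht : g (∑ i, a i * x i) ≤ t) :
    ((t, x, z) : ℝ × (Fin n → ℝ) × (Fin n → ℝ)) ∈ closure (convexHull ℝ (Qset g a)) := by
  have hpt : ∀ i0 : Fin n, ((t, x, fun j => if j = i0 then (1:ℝ) else 0) :
      ℝ × (Fin n → ℝ) × (Fin n → ℝ)) ∈ closure (convexHull ℝ (Qset g a)) := by
    intro i0
    apply binary_mem g a hg h0 ha _ _ _ t x ht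
    · intro i
      by_cases hi : i = i0
      · right; rw [if_pos hi]
      · left; rw [if_neg hi]
    · have : (∑ j, if j = i0 then (1:ℝ) else 0) = 1 := by
        rw [Finset.sum_ite_eq' Finset.univ i0 (fun _ => (1:ℝ))]
        simp
      rw [this]
  have := Convex.sum_mem ((convex_convexHull ℝ (Qset g a)).closure)
    (t := Finset.univ) (w := z)
    (z := fun i0 => ((t, x, fun j => if j = i0 then (1:ℝ) else 0) :
      ℝ × (Fin n → ℝ) × (Fin n → ℝ)))
    (fun i _ => (hbox i).1) (by rw [hsum]) (fun i _ => hpt i)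
  convert this using 1
  refine Prod.ext ?_ (Prod.ext ?_ ?_)
  · rw [Prod.fst_sum]
    simp only [Prod.smul_mk, smul_eq_mul]
    rw [← Finset.sum_mul, hsum, one_mul]
  · rw [Prod.snd_sum, Prod.fst_sum]
    funext j
    simp only [Prod.smul_mk, Prod.snd_sum]
    rw [Finset.sum_apply]
    simp only [Pi.smul_apply, smul_eq_mul]
    rw [← Finset.sum_mul, hsum, one_mul]
  · rw [Prod.snd_sum, Prod.snd_sum]
    funext j
    rw [Finset.sum_apply]
    simp only [Prod.smul_mk, Pi.smul_apply, smul_eq_mul]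
    rw [Finset.sum_congr rfl (fun i _ => mul_ite (j = i) (z i) (1:ℝ) 0)]
    simp only [mul_one, mul_zero]
    rw [Finset.sum_ite_eq Finset.univ j z]
    simp

lemma caseII (hg : ConvexOn ℝ Set.univ g) (h0 : g 0 = 0) (ha : ∀ i, a i ≠ 0) :
    ∀ N : ℕ, ∀ z : Fin n → ℝ,
    (Finset.univ.filter (fun i => z i ≠ 0 ∧ z i ≠ 1)).card ≤ N →
    (∀ i, z i ∈ Set.Icc (0:ℝ) 1) → 1 ≤ ∑ i, z i →
    ∀ t : ℝ, ∀ x : Fin n → ℝ, g (∑ i, a i * x i) ≤ t →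
    ((t, x, z) : ℝ × (Fin n → ℝ) × (Fin n → ℝ)) ∈ closure (convexHull ℝ (Qset g a)) := by
  intro N
  induction N with
  | zero =>
    intro z hcard hbox hsum t x ht
    apply binary_mem g a hg h0 ha z _ hsum t x ht
    intro i
    by_contra hc
    push_neg at hc
    have : i ∈ Finset.univ.filter (fun i => z i ≠ 0 ∧ z i ≠ 1) := by
      simp only [Finset.mem_filter, Finset.mem_univ, true_and]
      exact hc
    have := Finset.card_pos.2 ⟨i, this⟩
    omega
  | succ N ih =>
    intro z hcard hbox hsum t x ht
    by_cases hbin : ∀ i, z i = 0 ∨ z i = 1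
    · exact binary_mem g a hg h0 ha z hbin hsum t x ht
    push_neg at hbin
    obtain ⟨i1, hi10, hi11⟩ := hbin
    rcases eq_or_lt_of_le hsum with hsum1 | hsum1
    · exact sum_one_mem g a hg h0 ha z hbox hsum1.symm t x ht
    -- now 1 < ∑ z, and z i1 is fractional
    set T := Finset.univ.filter (fun i => z i ≠ 0) with hT
    have hi1T : i1 ∈ T := by simp [hT, hi10]
    have hTne : T.Nonempty := ⟨i1, hi1T⟩
    set m := T.inf' hTne z with hm
    obtain ⟨im, himT, him⟩ := Finset.exists_mem_eq_inf' hTne z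
    have hmem : ∀ i ∈ T, m ≤ z i := fun i hi => Finset.inf'_le z hi
    have hmpos : 0 < m := by
      rw [hm, him]
      have : z im ≠ 0 := by simpa [hT] using himT
      exact lt_of_le_of_ne (hbox im).1 (Ne.symm this)
    have hm1 : m < 1 := lt_of_le_of_lt (hmem i1 hi1T)
      (lt_of_le_of_ne (hbox i1).2 hi11)
    have hsumT : (∑ i, z i) = ∑ i ∈ T, z i := by
      rw [hT]; exact (Finset.sum_filter_ne_zero Finset.univ).symm
    have hT2 : 2 ≤ T.card := by
      by_contra hc
      push_neg at hc
      interval_cases h : T.card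
      · rw [Finset.card_eq_zero] at h
        exact absurd (h ▸ hi1T) (Finset.notMem_empty i1)
      · obtain ⟨j, hj⟩ := Finset.card_eq_one.1 h
        have : (∑ i ∈ T, z i) = z j := by rw [hj, Finset.sum_singleton]
        rw [hsumT, this] at hsum1
        exact absurd (hbox j).2 (by linarith)
    have hTcR : (1:ℝ) ≤ (T.card : ℝ) - 1 := by
      have : (2:ℝ) ≤ (T.card : ℝ) := by exact_mod_cast hT2
      linarith
    set s := min m ((∑ i, z i - 1)/((T.card : ℝ) - 1)) with hs
    have hspos : 0 < s := by
      apply lt_min hmpos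
      apply div_pos (by linarith) (by linarith)
    have hsm : s ≤ m := min_le_left _ _
    have hs1 : s < 1 := lt_of_le_of_lt hsm hm1
    have hskey : s * ((T.card : ℝ) - 1) ≤ (∑ i, z i) - 1 := by
      have := min_le_right m ((∑ i, z i - 1)/((T.card : ℝ) - 1))
      rw [← hs] at this
      calc s * ((T.card : ℝ) - 1)
          ≤ ((∑ i, z i - 1)/((T.card : ℝ) - 1)) * ((T.card : ℝ) - 1) := by
            apply mul_le_mul_of_nonneg_right this (by linarith)
        _ = (∑ i, z i) - 1 := by field_simp
    set χ : Fin n → ℝ := fun i => if i ∈ T then 1 else 0 with hχ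
    set z' : Fin n → ℝ := fun i => (z i - s * χ i)/(1-s) with hz'
    have hz'val : ∀ i, i ∈ T → z' i = (z i - s)/(1-s) := by
      intro i hi; rw [hz']; show (z i - s * χ i)/(1-s) = _
      rw [hχ]; show (z i - s * (if i ∈ T then 1 else 0))/(1-s) = _
      rw [if_pos hi, mul_one]
    have hz'val0 : ∀ i, i ∉ T → z' i = 0 := by
      intro i hi
      have hz0 : z i = 0 := by
        by_contra hzi; exact hi (by simp [hT, hzi])
      rw [hz']; show (z i - s * χ i)/(1-s) = 0
      rw [hχ]; show (z i - s * (if i ∈ T then 1 else 0))/(1-s) = 0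
      rw [if_neg hi, mul_zero, hz0, sub_zero, zero_div]
    have hz'box : ∀ i, z' i ∈ Set.Icc (0:ℝ) 1 := by
      intro i
      by_cases hi : i ∈ T
      · rw [hz'val i hi]
        constructor
        · apply div_nonneg _ (by linarith)
          have := hmem i hi
          linarith
        · rw [div_le_one (by linarith)]
          have := (hbox i).2
          linarith
      · rw [hz'val0 i hi]; exact ⟨le_refl _, zero_le_one⟩
    have hχsum : (∑ i, χ i) = (T.card : ℝ) := by
      rw [hχ]; simp [Finset.sum_ite_mem]
    have hz'sum : (∑ i, z' i) = ((∑ i, z i) - s * (T.card : ℝ))/(1-s) := by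
      rw [hz']
      rw [← Finset.sum_div]
      congr 1
      rw [Finset.sum_sub_distrib]
      congr 1
      rw [← Finset.mul_sum, hχsum]
    have hz'sum1 : 1 ≤ ∑ i, z' i := by
      rw [hz'sum, le_div_iff₀ (by linarith)]
      nlinarith
    have hχmem : ((t, x, χ) : ℝ × (Fin n → ℝ) × (Fin n → ℝ))
        ∈ closure (convexHull ℝ (Qset g a)) := by
      apply binary_mem g a hg h0 ha χ _ _ t x ht
      · intro i; rw [hχ]
        by_cases hi : i ∈ T
        · right; show (if i ∈ T then (1:ℝ) else 0) = 1; rw [if_pos hi]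
        · left; show (if i ∈ T then (1:ℝ) else 0) = 0; rw [if_neg hi]
      · rw [hχsum]; linarith
    have hz'mem : ((t, x, z') : ℝ × (Fin n → ℝ) × (Fin n → ℝ))
        ∈ closure (convexHull ℝ (Qset g a)) := by
      rcases eq_or_lt_of_le hsm with hseq | hslt
      · -- s = m : the coordinate im becomes 0, fractional count drops
        have hsub : Finset.univ.filter (fun i => z' i ≠ 0 ∧ z' i ≠ 1)
            ⊆ (Finset.univ.filter (fun i => z i ≠ 0 ∧ z i ≠ 1)).erase im := by
          intro i hi
          simp only [Finset.mem_filter, Finset.mem_univ, true_and] at hi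
          rw [Finset.mem_erase]
          constructor
          · intro hieq
            subst hieq
            apply hi.1
            rw [hz'val i himT, ← him, ← hm, ← hseq]
            simp
          · simp only [Finset.mem_filter, Finset.mem_univ, true_and]
            constructor
            · intro hz0
              apply hi.1
              have hiT : i ∉ T := by simp [hT, hz0]
              exact hz'val0 i hiT
            · intro hz1
              apply hi.2
              have hiT : i ∈ T := by simp only [hT, Finset.mem_filter,
                Finset.mem_univ, true_and]; rw [hz1]; norm_num
              rw [hz'val i hiT, hz1]
              have h1s : (1:ℝ) - s ≠ 0 := by linarith
              field_simp
        have him_frac : im ∈ Finset.univ.filter (fun i => z i ≠ 0 ∧ z i ≠ 1) := by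
          simp only [Finset.mem_filter, Finset.mem_univ, true_and]
          have h1 : z im ≠ 0 := by simpa [hT] using himT
          have h2 : z im ≠ 1 := by
            rw [← him, ← hm]
            intro hc
            rw [hc] at hm1
            exact absurd hm1 (lt_irrefl 1)
          exact ⟨h1, h2⟩
        have hcard' : (Finset.univ.filter (fun i => z' i ≠ 0 ∧ z' i ≠ 1)).card ≤ N := by
          calc (Finset.univ.filter (fun i => z' i ≠ 0 ∧ z' i ≠ 1)).card
              ≤ ((Finset.univ.filter (fun i => z i ≠ 0 ∧ z i ≠ 1)).erase im).card :=
                Finset.card_le_card hsub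
            _ = (Finset.univ.filter (fun i => z i ≠ 0 ∧ z i ≠ 1)).card - 1 :=
                Finset.card_erase_of_mem him_frac
            _ ≤ N := by omega
        exact ih z' hcard' hz'box hz'sum1 t x ht
      · -- s < m, so s = (∑z - 1)/(card - 1) and ∑ z' = 1
        have hseq : s = ((∑ i, z i) - 1)/((T.card : ℝ) - 1) := by
          rcases min_cases m ((∑ i, z i - 1)/((T.card : ℝ) - 1)) with ⟨h1, h2⟩ | ⟨h1, h2⟩
          · rw [hs] at hslt
            rw [h1] at hslt
            exact absurd hslt (lt_irrefl m)
          · rw [hs, h1]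
        have hz's1 : (∑ i, z' i) = 1 := by
          rw [hz'sum]
          rw [div_eq_one_iff_eq (by linarith)]
          rw [hseq]
          field_simp
          ring
        exact sum_one_mem g a hg h0 ha z' hz'box hz's1 t x ht
    have hconv := ((convex_convexHull ℝ (Qset g a)).closure) hχmem hz'mem
      hspos.le (by linarith : (0:ℝ) ≤ 1 - s) (by ring)
    convert hconv using 1
    refine Prod.ext ?_ (Prod.ext ?_ ?_)
    · show t = s * t + (1-s) * t
      ring
    · show x = fun j => s * x j + (1-s) * x j
      funext j; ring_nf
    · show z = fun i => s * χ i + (1-s) * z' i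
      funext i
      show z i = s * χ i + (1-s) * ((z i - s * χ i)/(1-s))
      have h1 : (1:ℝ) - s ≠ 0 := by linarith
      field_simp
      ring

lemma caseI (hg : ConvexOn ℝ Set.univ g) (h0 : g 0 = 0) (ha : ∀ i, a i ≠ 0)
    (z : Fin n → ℝ) (hbox : ∀ i, z i ∈ Set.Icc (0:ℝ) 1) (hzsum : ∑ i, z i ≤ 1)
    (t : ℝ) (x : Fin n → ℝ)
    (ht : ∀ W : ℝ, 0 < W → (∑ i, z i) ≤ W → W * g ((∑ i, a i * x i)/W) ≤ t) :
    ((t, x, z) : ℝ × (Fin n → ℝ) × (Fin n → ℝ)) ∈ closure (convexHull ℝ (Qset g a)) := by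
  apply closure_mem_aux
  intro θ hθ0 hθ1
  set v := ∑ i, a i * x i with hv
  set Sz := ∑ i, z i with hSz
  have hSz0 : 0 ≤ Sz := Finset.sum_nonneg fun i _ => (hbox i).1
  set W := (1-θ) * Sz + θ with hW
  have hW0 : 0 < W := by nlinarith
  have hW1 : W ≤ 1 := by nlinarith
  have hSzW : Sz ≤ W := by nlinarith
  set w := v / W with hw
  have hcost : W * g w ≤ t := ht W hW0 hSzW
  set F : ℝ × (Fin n → ℝ) × (Fin n → ℝ) :=
    (g w + (t - W * g w)/θ, fun k => (x k - (1-θ) * z k * (w / a k))/θ, fun _ => (1:ℝ))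
    with hF
  set Z0 : ℝ × (Fin n → ℝ) × (Fin n → ℝ) := (0, fun _ => 0, fun _ => 0) with hZ0
  set wgt : Fin n ⊕ Fin 2 → ℝ := Sum.elim (fun i => (1-θ) * z i) ![θ, 1 - W] with hwgt
  set pts : Fin n ⊕ Fin 2 → (ℝ × (Fin n → ℝ) × (Fin n → ℝ)) :=
    Sum.elim
      (fun i => ((g w, fun j => if j = i then w / a i else 0,
        fun j => if j = i then (1:ℝ) else 0) : ℝ × (Fin n → ℝ) × (Fin n → ℝ)))
      ![F, Z0] with hpts
  have hnonneg : ∀ j ∈ (Finset.univ : Finset (Fin n ⊕ Fin 2)), 0 ≤ wgt j := by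
    rintro (i | j) _
    · show 0 ≤ (1-θ) * z i
      have := (hbox i).1
      nlinarith
    · fin_cases j
      · show (0:ℝ) ≤ θ; linarith
      · show (0:ℝ) ≤ 1 - W; linarith
  have hsum1 : (∑ j : Fin n ⊕ Fin 2, wgt j) = 1 := by
    rw [Fintype.sum_sum_type]
    have e1 : (∑ i : Fin n, wgt (Sum.inl i)) = (1-θ) * Sz := by
      show (∑ i : Fin n, (1-θ) * z i) = (1-θ) * Sz
      rw [← Finset.mul_sum, hSz]
    have e2 : (∑ j : Fin 2, wgt (Sum.inr j)) = θ + (1 - W) := by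
      show (∑ j : Fin 2, (![θ, 1 - W] : Fin 2 → ℝ) j) = θ + (1 - W)
      rw [Fin.sum_univ_two]
      rfl
    rw [e1, e2, hW]
    ring
  have hmem : ∀ j ∈ (Finset.univ : Finset (Fin n ⊕ Fin 2)), pts j ∈ Qset g a := by
    rintro (i | j) _
    · show ((g w, fun j => if j = i then w / a i else 0,
        fun j => if j = i then (1:ℝ) else 0) : ℝ × (Fin n → ℝ) × (Fin n → ℝ)) ∈ Qset g a
      refine ⟨?_, ?_, ?_⟩
      · show g (∑ j, a j * if j = i then w / a i else 0) ≤ g w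
        have : (∑ j, a j * if j = i then w / a i else 0) = w := by
          rw [Finset.sum_eq_single i]
          · show a i * (if i = i then w / a i else 0) = w
            rw [if_pos rfl, mul_comm, div_mul_cancel₀ w (ha i)]
          · intro j _ hj
            show a j * (if j = i then w / a i else 0) = 0
            rw [if_neg hj, mul_zero]
          · intro h; exact absurd (Finset.mem_univ i) h
        rw [this]
      · intro j
        by_cases hj : j = i
        · right; show (if j = i then (1:ℝ) else 0) = 1; rw [if_pos hj]
        · left; show (if j = i then (1:ℝ) else 0) = 0; rw [if_neg hj]
      · intro j
        show (if j = i then w / a i else 0) * (1 - if j = i then (1:ℝ) else 0) = 0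
        by_cases hj : j = i
        · rw [if_pos hj, if_pos hj]; ring
        · rw [if_neg hj]; ring
    · fin_cases j
      · show F ∈ Qset g a
        rw [hF]
        refine ⟨?_, fun i => Or.inr rfl, fun i => by ring⟩
        show g (∑ k, a k * ((x k - (1-θ) * z k * (w / a k))/θ)) ≤ g w + (t - W * g w)/θ
        have hsumF : (∑ k, a k * ((x k - (1-θ) * z k * (w / a k))/θ)) = w := by
          have e3 : ∀ k, a k * ((x k - (1-θ) * z k * (w / a k))/θ)
              = (a k * x k - (1-θ) * (z k * w))/θ := by
            intro k
            have hak : a k * (w / a k) = w := by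
              rw [mul_comm, div_mul_cancel₀ w (ha k)]
            rw [← mul_div_assoc]
            congr 1
            calc a k * (x k - (1-θ) * z k * (w / a k))
                = a k * x k - ((1-θ) * z k) * (a k * (w / a k)) := by ring
              _ = a k * x k - (1-θ) * (z k * w) := by rw [hak]; ring
          rw [Finset.sum_congr rfl (fun k _ => e3 k), ← Finset.sum_div,
            Finset.sum_sub_distrib, ← hv, ← Finset.mul_sum, ← Finset.sum_mul, ← hSz]
          have hvW : v = W * w := by
            rw [hw, mul_comm, div_mul_cancel₀ v (ne_of_gt hW0)]
          rw [hvW, hW, div_eq_iff (ne_of_gt hθ0)]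
          ring
        rw [hsumF]
        have : (0:ℝ) ≤ (t - W * g w)/θ := div_nonneg (by linarith) hθ0.le
        linarith
      · show Z0 ∈ Qset g a
        rw [hZ0]
        refine ⟨?_, fun i => Or.inl rfl, fun i => by ring⟩
        show g (∑ k, a k * 0) ≤ 0
        rw [Finset.sum_eq_zero (fun k _ => mul_zero (a k)), h0]
  have hcomb := Convex.sum_mem (convex_convexHull ℝ (Qset g a)) hnonneg hsum1
    (fun j hj => subset_convexHull ℝ _ (hmem j hj))
  convert hcomb using 1
  refine Prod.ext ?_ (Prod.ext ?_ ?_)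
  · rw [Prod.fst_sum, Fintype.sum_sum_type]
    have e1 : (∑ i : Fin n, (wgt (Sum.inl i) • pts (Sum.inl i)).1) = (1-θ) * Sz * g w := by
      have h' : ∀ i : Fin n, (wgt (Sum.inl i) • pts (Sum.inl i)).1 = (1-θ) * z i * g w := by
        intro i; show (1-θ) * z i * g w = _; ring
      rw [Finset.sum_congr rfl (fun i _ => h' i), ← Finset.sum_mul, ← Finset.mul_sum, ← hSz]
    have e2 : (∑ j : Fin 2, (wgt (Sum.inr j) • pts (Sum.inr j)).1)
        = θ * (g w + (t - W * g w)/θ) + (1 - W) * 0 := by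
      rw [Fin.sum_univ_two]
      rfl
    rw [e1, e2]
    field_simp
    ring
  · rw [Prod.snd_sum, Prod.fst_sum]
    funext k
    rw [Finset.sum_apply, Fintype.sum_sum_type]
    have e1 : (∑ i : Fin n, ((wgt (Sum.inl i) • pts (Sum.inl i)).2.1) k)
        = (1-θ) * z k * (w / a k) := by
      have h' : ∀ i : Fin n, ((wgt (Sum.inl i) • pts (Sum.inl i)).2.1) k
          = if k = i then (1-θ) * z i * (w / a i) else 0 := by
        intro i
        show (1-θ) * z i * (if k = i then w / a i else 0) = _
        by_cases hk : k = i
        · rw [if_pos hk, if_pos hk]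
        · rw [if_neg hk, if_neg hk, mul_zero]
      rw [Finset.sum_congr rfl (fun i _ => h' i), Finset.sum_ite_eq Finset.univ k]
      simp
    have e2 : (∑ j : Fin 2, ((wgt (Sum.inr j) • pts (Sum.inr j)).2.1) k)
        = θ * ((x k - (1-θ) * z k * (w / a k))/θ) + (1 - W) * 0 := by
      rw [Fin.sum_univ_two]
      rfl
    rw [e1, e2]
    field_simp
    ring
  · rw [Prod.snd_sum, Prod.snd_sum]
    funext k
    rw [Finset.sum_apply, Fintype.sum_sum_type]
    have e1 : (∑ i : Fin n, ((wgt (Sum.inl i) • pts (Sum.inl i)).2.2) k)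
        = (1-θ) * z k := by
      have h' : ∀ i : Fin n, ((wgt (Sum.inl i) • pts (Sum.inl i)).2.2) k
          = if k = i then (1-θ) * z i else 0 := by
        intro i
        show (1-θ) * z i * (if k = i then (1:ℝ) else 0) = _
        by_cases hk : k = i
        · rw [if_pos hk, if_pos hk, mul_one]
        · rw [if_neg hk, if_neg hk, mul_zero]
      rw [Finset.sum_congr rfl (fun i _ => h' i), Finset.sum_ite_eq Finset.univ k]
      simp
    have e2 : (∑ j : Fin 2, ((wgt (Sum.inr j) • pts (Sum.inr j)).2.2) k)
        = θ * 1 + (1 - W) * 0 := by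
      rw [Fin.sum_univ_two]
      rfl
    rw [e1, e2]
    ring

end main

theorem stmt11 (n : ℕ) (g : ℝ → ℝ) (hg : ConvexOn ℝ Set.univ g) (h0 : g 0 = 0)
    (a : Fin n → ℝ) (ha : ∀ i, a i ≠ 0) :
    closure (convexHull ℝ {p : ℝ × (Fin n → ℝ) × (Fin n → ℝ) |
        g (∑ i, a i * p.2.1 i) ≤ p.1 ∧ (∀ i, p.2.2 i = 0 ∨ p.2.2 i = 1) ∧
        ∀ i, p.2.1 i * (1 - p.2.2 i) = 0}) =
      {p : ℝ × (Fin n → ℝ) × (Fin n → ℝ) |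
        persp g (∑ i, a i * p.2.1 i) (min 1 (∑ i, p.2.2 i)) ≤ (p.1 : EReal) ∧
        ∀ i, p.2.2 i ∈ Set.Icc (0 : ℝ) 1} := by
  show closure (convexHull ℝ (Qset g a)) = Sset g a
  apply Set.Subset.antisymm
  · exact closure_minimal (convexHull_min (Qsub g a hg h0) (Sset_convex g a hg h0))
      (Sset_closed g a hg h0)
  · intro p hp
    obtain ⟨t, q⟩ := p
    obtain ⟨x, z⟩ := q
    obtain ⟨hpersp, hbox⟩ := hp
    rcases le_or_gt (∑ i, z i) 1 with hle | hlt
    · apply caseI g a hg h0 ha z hbox hle t x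
      intro W hW0 hSzW
      exact cost_bound g a hg h0 (p := (t,x,z)) ⟨hpersp, hbox⟩ hW0
        (le_trans (min_le_right _ _) hSzW)
    · apply caseII g a hg h0 ha
        ((Finset.univ.filter (fun i => z i ≠ 0 ∧ z i ≠ 1)).card) z le_rfl hbox hlt.le t x
      have := cost_bound g a hg h0 (p := (t,x,z)) ⟨hpersp, hbox⟩ one_pos (min_le_left _ _)
      simpa using this
end

section
/- Consider the 0-1 knapsack problem min{-vᵀz : wᵀz ≤ W, z ∈ {0,1}ⁿ} with nonnegative integer data v, w, W satisfying wᵢ ≤ W ≤ ∑ⱼ wⱼ for all i. Set M₁ = ∑ᵢ vᵢ + 1 and M₂ = 2nW²M₁ + 1. Then the knapsack problem has the same optimal value as min over (x, z) ∈ [0,1]^{n+1} × {0,1}^{n+1} with 0 ≤ xᵢ ≤ zᵢ of M₁(Wx₀ + ∑ᵢ wᵢxᵢ - W)² - M₂∑ᵢ₌₁ⁿ xᵢ + ∑ᵢ₌₁ⁿ (M₂ - vᵢ)zᵢ. -/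
lemma key_ineq (N Wr M1 t d : ℝ) (hN : 1 ≤ N) (hWr : 1 ≤ Wr) (hM : 1 ≤ M1)
    (hd : 0 ≤ d) (ht : 1 - Wr * d ≤ t) :
    M1 ≤ M1 * t ^ 2 + (2 * N * Wr ^ 2 * M1 + 1) * d := by
  have hM0 : (0:ℝ) ≤ M1 := by linarith
  have hNW : 1 ≤ N * Wr := by nlinarith
  rcases le_or_gt (Wr * d) 1 with h | h
  · have ht0 : (0:ℝ) ≤ t := le_trans (by linarith) ht
    nlinarith [mul_nonneg hM0 (mul_nonneg (sub_nonneg.2 ht) (by linarith : (0:ℝ) ≤ t + (1 - Wr * d))),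
      mul_nonneg (mul_nonneg (mul_nonneg (by linarith : (0:ℝ) ≤ 2 * M1) (by linarith : (0:ℝ) ≤ Wr)) hd) (sub_nonneg.2 hNW),
      mul_nonneg hM0 (sq_nonneg (Wr * d))]
  · nlinarith [mul_nonneg hM0 (sq_nonneg t),
      mul_nonneg (by linarith : (0:ℝ) ≤ Wr * d - 1) (by nlinarith : (0:ℝ) ≤ 2 * N * Wr * M1),
      mul_nonneg (sub_nonneg.2 hNW) (by linarith : (0:ℝ) ≤ 2 * M1)]

theorem stmt13 (n : ℕ) (v w : Fin n → ℕ) (W : ℕ)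
    (hw : ∀ i, w i ≤ W) (hW : W ≤ ∑ i, w i) :
    sInf {c : ℝ | ∃ z : Fin n → ℝ, (∀ i, z i = 0 ∨ z i = 1) ∧
        (∑ i, (w i : ℝ) * z i) ≤ W ∧ c = -∑ i, (v i : ℝ) * z i} =
    sInf {c : ℝ | ∃ x z : Fin (n + 1) → ℝ, (∀ i, 0 ≤ x i ∧ x i ≤ z i) ∧
        (∀ i, z i = 0 ∨ z i = 1) ∧
        c = ((∑ i, (v i : ℝ)) + 1) *
              ((W : ℝ) * x 0 + (∑ i : Fin n, (w i : ℝ) * x i.succ) - W) ^ 2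
            - (2 * n * (W : ℝ) ^ 2 * ((∑ i, (v i : ℝ)) + 1) + 1) * (∑ i : Fin n, x i.succ)
            + ∑ i : Fin n,
                ((2 * n * (W : ℝ) ^ 2 * ((∑ j, (v j : ℝ)) + 1) + 1) - (v i : ℝ)) * z i.succ} := by
  classical
  set A : ℝ := ∑ i, (v i : ℝ) with hAdef
  set M1 : ℝ := A + 1 with hM1def
  set M2 : ℝ := 2 * n * (W : ℝ) ^ 2 * M1 + 1 with hM2def
  have hA0 : 0 ≤ A := Finset.sum_nonneg fun i _ => Nat.cast_nonneg _
  have hM1_1 : 1 ≤ M1 := by rw [hM1def]; linarith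
  have hM2_1 : 1 ≤ M2 := by
    have h2 : (0:ℝ) ≤ 2 * (n:ℝ) * (W:ℝ) ^ 2 * M1 := by positivity
    rw [hM2def]; linarith
  set S1 : Set ℝ := {c : ℝ | ∃ z : Fin n → ℝ, (∀ i, z i = 0 ∨ z i = 1) ∧
      (∑ i, (w i : ℝ) * z i) ≤ W ∧ c = -∑ i, (v i : ℝ) * z i} with hS1def
  set S2 : Set ℝ := {c : ℝ | ∃ x z : Fin (n + 1) → ℝ, (∀ i, 0 ≤ x i ∧ x i ≤ z i) ∧
      (∀ i, z i = 0 ∨ z i = 1) ∧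
      c = M1 * ((W : ℝ) * x 0 + (∑ i : Fin n, (w i : ℝ) * x i.succ) - W) ^ 2
          - M2 * (∑ i : Fin n, x i.succ)
          + ∑ i : Fin n, (M2 - (v i : ℝ)) * z i.succ} with hS2def
  have h0S1 : (0:ℝ) ∈ S1 := by
    rw [hS1def]
    exact ⟨fun _ => 0, fun i => Or.inl rfl, by simp, by simp⟩
  have hS1ne : S1.Nonempty := ⟨0, h0S1⟩
  have hbdd1 : BddBelow S1 := by
    refine ⟨-A, fun c hc => ?_⟩
    rw [hS1def] at hc
    obtain ⟨z, hzb, -, rfl⟩ := hc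
    have hle : ∑ i, (v i : ℝ) * z i ≤ A := by
      rw [hAdef]
      exact Finset.sum_le_sum fun i _ => by rcases hzb i with h | h <;> simp [h]
    linarith
  -- easy direction: S1 ⊆ S2
  have hsub : S1 ⊆ S2 := by
    intro c hc
    rw [hS1def] at hc
    obtain ⟨z, hzb, hzw, rfl⟩ := hc
    rw [hS2def]
    have hz01 : ∀ i, 0 ≤ z i ∧ z i ≤ 1 := fun i => by rcases hzb i with h | h <;> simp [h]
    set sw : ℝ := ∑ i, (w i : ℝ) * z i with hswdef
    have hsw0 : 0 ≤ sw := Finset.sum_nonneg fun i _ => mul_nonneg (Nat.cast_nonneg _) (hz01 i).1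
    have key : ∃ x0 : ℝ, 0 ≤ x0 ∧ x0 ≤ 1 ∧ (W:ℝ) * x0 + sw - W = 0 := by
      rcases Nat.eq_zero_or_pos W with h | h
      · refine ⟨0, le_refl _, zero_le_one, ?_⟩
        have hz : sw = 0 := le_antisymm (by simpa [h] using hzw) hsw0
        simp [h, hz]
      · have hWpos : (0:ℝ) < W := by exact_mod_cast h
        refine ⟨((W:ℝ) - sw) / W, div_nonneg (by linarith [hzw]) hWpos.le, ?_, ?_⟩
        · rw [div_le_one hWpos]; linarith
        · field_simp; ring
    obtain ⟨x0, hx00, hx01, hteq⟩ := key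
    refine ⟨Fin.cons x0 z, Fin.cons 1 z, ?_, ?_, ?_⟩
    · intro i
      refine Fin.cases ?_ ?_ i
      · simp only [Fin.cons_zero]
        exact ⟨hx00, hx01⟩
      · intro j
        simp only [Fin.cons_succ]
        exact ⟨(hz01 j).1, le_refl (z j)⟩
    · intro i
      refine Fin.cases ?_ ?_ i
      · right; simp
      · intro j; simpa using hzb j
    · simp only [Fin.cons_zero, Fin.cons_succ]
      rw [← hswdef, hteq]
      have expand : ∑ i : Fin n, (M2 - (v i : ℝ)) * z i
          = M2 * (∑ i, z i) - ∑ i, (v i : ℝ) * z i := by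
        rw [Finset.mul_sum, ← Finset.sum_sub_distrib]
        exact Finset.sum_congr rfl fun i _ => by ring
      rw [expand]; ring
  -- hard direction
  have hlow : ∀ c ∈ S2, sInf S1 ≤ c := by
    intro c hc
    rw [hS2def] at hc
    obtain ⟨x, z, hxz, hzb, rfl⟩ := hc
    have hx0 : 0 ≤ x 0 := (hxz 0).1
    have hxz' : ∀ i : Fin n, 0 ≤ x i.succ ∧ x i.succ ≤ z i.succ := fun i => hxz i.succ
    have hds : ∑ i : Fin n, x i.succ ≤ ∑ i : Fin n, z i.succ :=
      Finset.sum_le_sum fun i _ => (hxz' i).2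
    have expand : ∑ i : Fin n, (M2 - (v i : ℝ)) * z i.succ
        = M2 * (∑ i : Fin n, z i.succ) - ∑ i : Fin n, (v i : ℝ) * z i.succ := by
      rw [Finset.mul_sum, ← Finset.sum_sub_distrib]
      exact Finset.sum_congr rfl fun i _ => by ring
    by_cases hfeas : (∑ i : Fin n, (w i : ℝ) * z i.succ) ≤ W
    · have hmem : (-∑ i : Fin n, (v i : ℝ) * z i.succ) ∈ S1 := by
        rw [hS1def]
        exact ⟨fun i => z i.succ, fun i => hzb i.succ, hfeas, rfl⟩
      have h1 : sInf S1 ≤ -∑ i : Fin n, (v i : ℝ) * z i.succ := csInf_le hbdd1 hmem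
      have hsq : 0 ≤ M1 * ((W : ℝ) * x 0 + (∑ i : Fin n, (w i : ℝ) * x i.succ) - W) ^ 2 :=
        mul_nonneg (by linarith) (sq_nonneg _)
      have hprod : 0 ≤ M2 * ((∑ i : Fin n, z i.succ) - ∑ i : Fin n, x i.succ) :=
        mul_nonneg (by linarith) (by linarith)
      rw [expand]
      nlinarith [hsq, hprod, h1]
    · push_neg at hfeas
      have hzcast : ∀ i : Fin n, ∃ b : ℕ, z i.succ = (b : ℝ) := fun i => by
        rcases hzb i.succ with h | h
        · exact ⟨0, by simp [h]⟩
        · exact ⟨1, by simp [h]⟩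
      choose b hbz using hzcast
      have hsum_eq : ∑ i : Fin n, (w i : ℝ) * z i.succ = ((∑ i, w i * b i : ℕ) : ℝ) := by
        push_cast
        exact Finset.sum_congr rfl fun i _ => by rw [hbz i]
      have hWlt : W < ∑ i, w i * b i := by
        by_contra h
        push_neg at h
        have hle : ((∑ i, w i * b i : ℕ) : ℝ) ≤ W := by exact_mod_cast h
        rw [← hsum_eq] at hle
        linarith
      have hW1R : (W : ℝ) + 1 ≤ ∑ i : Fin n, (w i : ℝ) * z i.succ := by
        rw [hsum_eq]
        exact_mod_cast Nat.succ_le_of_lt hWlt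
      have hn0 : n ≠ 0 := by
        rintro rfl
        have : (W : ℝ) + 1 ≤ 0 := by simpa using hW1R
        have : (0:ℝ) ≤ W := Nat.cast_nonneg _
        linarith
      have hW0 : W ≠ 0 := by
        rintro h
        have hww : ∀ i, w i = 0 := fun i => Nat.le_zero.mp (h ▸ hw i)
        have : (∑ i, w i * b i) = 0 := by simp [hww]
        rw [this] at hWlt
        omega
      have hn1 : (1:ℝ) ≤ n := by exact_mod_cast Nat.one_le_iff_ne_zero.2 hn0
      have hW1 : (1:ℝ) ≤ W := by exact_mod_cast Nat.one_le_iff_ne_zero.2 hW0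
      set d : ℝ := (∑ i : Fin n, z i.succ) - ∑ i : Fin n, x i.succ with hddef
      have hd0 : 0 ≤ d := by rw [hddef]; linarith
      have hwd : ∑ i : Fin n, (w i : ℝ) * (z i.succ - x i.succ) ≤ (W : ℝ) * d := by
        have h1 : ∑ i : Fin n, (w i : ℝ) * (z i.succ - x i.succ)
            ≤ ∑ i : Fin n, (W : ℝ) * (z i.succ - x i.succ) :=
          Finset.sum_le_sum fun i _ => mul_le_mul_of_nonneg_right
            (by exact_mod_cast hw i) (by linarith [(hxz' i).2])
        have h2 : ∑ i : Fin n, (W : ℝ) * (z i.succ - x i.succ) = (W : ℝ) * d := by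
          rw [hddef, ← Finset.mul_sum, ← Finset.sum_sub_distrib]
        linarith
      have hsplit : ∑ i : Fin n, (w i : ℝ) * x i.succ
          = (∑ i : Fin n, (w i : ℝ) * z i.succ)
            - ∑ i : Fin n, (w i : ℝ) * (z i.succ - x i.succ) := by
        rw [← Finset.sum_sub_distrib]
        exact Finset.sum_congr rfl fun i _ => by ring
      have hWx0 : 0 ≤ (W : ℝ) * x 0 := mul_nonneg (Nat.cast_nonneg _) hx0
      have ht : 1 - (W : ℝ) * d
          ≤ (W : ℝ) * x 0 + (∑ i : Fin n, (w i : ℝ) * x i.succ) - W := by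
        rw [hsplit]; linarith
      have hkey : M1 ≤ M1 * ((W : ℝ) * x 0 + (∑ i : Fin n, (w i : ℝ) * x i.succ) - W) ^ 2
          + M2 * d := by
        rw [hM2def]
        exact key_ineq n W M1 _ d hn1 hW1 hM1_1 hd0 ht
      have hvz : ∑ i : Fin n, (v i : ℝ) * z i.succ ≤ A := by
        rw [hAdef]
        exact Finset.sum_le_sum fun i _ => by rcases hzb i.succ with h | h <;> simp [h]
      have h0le : sInf S1 ≤ 0 := csInf_le hbdd1 h0S1
      have hM2d : M2 * d = M2 * (∑ i : Fin n, z i.succ) - M2 * (∑ i : Fin n, x i.succ) := by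
        rw [hddef]; ring
      rw [expand]
      have hM1A : M1 = A + 1 := hM1def
      linarith [hkey, hvz, h0le, hM2d]
  refine le_antisymm ?_ ?_
  · exact le_csInf ⟨0, hsub h0S1⟩ hlow
  · exact csInf_le_csInf ⟨sInf S1, fun c hc => hlow c hc⟩ hS1ne hsub
end

section
/- Under the reduction above with M₂ = 2nW²M₁ + 1, every optimal solution of the quadratic program min M₁(Wx₀ + ∑ᵢ wᵢxᵢ - W)² - M₂∑ᵢxᵢ + ∑ᵢ(M₂-vᵢ)zᵢ subject to 0 ≤ xᵢ ≤ zᵢ, zᵢ ∈ {0,1} satisfies xᵢ = zᵢ for all i ∈ {1,…,n}. -/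
/-- Objective of the quadratic program in the knapsack reduction. -/
noncomputable def qpObj (n : ℕ) (v w : Fin n → ℕ) (W : ℕ) (M₁ M₂ : ℝ)
    (x z : Fin (n + 1) → ℝ) : ℝ :=
  M₁ * ((W : ℝ) * x 0 + (∑ i : Fin n, (w i : ℝ) * x i.succ) - W) ^ 2
    - M₂ * (∑ i : Fin n, x i.succ) + ∑ i : Fin n, (M₂ - (v i : ℝ)) * z i.succ

set_option maxHeartbeats 1000000 in
theorem stmt14 (n : ℕ) (v w : Fin n → ℕ) (W : ℕ) (hw : ∀ i, w i ≤ W)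
    (M₁ M₂ : ℝ) (hM₁ : M₁ = (∑ i, (v i : ℝ)) + 1) (hM₂ : M₂ = 2 * n * (W : ℝ) ^ 2 * M₁ + 1)
    (x z : Fin (n + 1) → ℝ)
    (hfeas : (∀ i, 0 ≤ x i ∧ x i ≤ z i) ∧ ∀ i, z i = 0 ∨ z i = 1)
    (hopt : ∀ x' z' : Fin (n + 1) → ℝ,
      ((∀ i, 0 ≤ x' i ∧ x' i ≤ z' i) ∧ ∀ i, z' i = 0 ∨ z' i = 1) →
      qpObj n v w W M₁ M₂ x z ≤ qpObj n v w W M₁ M₂ x' z') :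
    ∀ i : Fin n, x i.succ = z i.succ := by
  obtain ⟨hxz, hz01⟩ := hfeas
  have hx1 : ∀ i, x i ≤ 1 := by
    intro i
    rcases hz01 i with h | h
    · have := (hxz i).2; rw [h] at this; linarith
    · have := (hxz i).2; rw [h] at this; linarith
  have hx0 : ∀ i, 0 ≤ x i := fun i => (hxz i).1
  have hM₁pos : 0 < M₁ := by
    have : (0:ℝ) ≤ ∑ i, (v i : ℝ) := Finset.sum_nonneg fun i _ => by positivity
    linarith
  intro j
  by_contra hne
  have hxlt : x j.succ < z j.succ := lt_of_le_of_ne (hxz j.succ).2 hne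
  have hz1 : z j.succ = 1 := by
    rcases hz01 j.succ with h0 | h1
    · exfalso; have := hx0 j.succ; rw [h0] at hxlt; linarith
    · exact h1
  set x' : Fin (n+1) → ℝ := Function.update x j.succ 1 with hx'
  have hfeas' : (∀ i, 0 ≤ x' i ∧ x' i ≤ z i) ∧ ∀ i, z i = 0 ∨ z i = 1 := by
    refine ⟨fun i => ?_, hz01⟩
    by_cases h : i = j.succ
    · subst h; simp [hx', hz1]
    · rw [hx', Function.update_of_ne h]; exact hxz i
  have hle := hopt x' z hfeas'
  set δ : ℝ := 1 - x j.succ with hδ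
  have hδpos : 0 < δ := by rw [hδ, ← hz1]; linarith
  have hδle : δ ≤ 1 := by have := hx0 j.succ; rw [hδ]; linarith
  have h0 : x' 0 = x 0 :=
    Function.update_of_ne (Ne.symm (Fin.succ_ne_zero j)) _ _
  have hdiff : ∀ (c : Fin n → ℝ),
      ∑ i : Fin n, c i * x' i.succ = (∑ i : Fin n, c i * x i.succ) + c j * δ := by
    intro c
    have h1 : ∑ i : Fin n, (c i * x' i.succ - c i * x i.succ) = c j * δ := by
      rw [Finset.sum_eq_single j]
      · rw [hx', Function.update_self]; ring
      · intro i _ hij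
        rw [hx', Function.update_of_ne (fun h => hij (Fin.succ_injective _ h))]; ring
      · simp
    rw [Finset.sum_sub_distrib] at h1
    linarith
  have hsum1 : ∑ i : Fin n, (w i : ℝ) * x' i.succ
      = (∑ i : Fin n, (w i : ℝ) * x i.succ) + (w j : ℝ) * δ := hdiff _
  have hsum2 : ∑ i : Fin n, x' i.succ = (∑ i : Fin n, x i.succ) + δ := by
    have := hdiff (fun _ => (1:ℝ))
    simpa using this
  set s : ℝ := (W : ℝ) * x 0 + (∑ i : Fin n, (w i : ℝ) * x i.succ) - W with hs
  set d : ℝ := (w j : ℝ) * δ with hd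
  have hd0 : 0 ≤ d := by positivity
  have hdW : d ≤ (W : ℝ) * δ := by
    have : (w j : ℝ) ≤ (W : ℝ) := Nat.cast_le.mpr (hw j)
    rw [hd]; nlinarith
  have hsum_lb : 0 ≤ ∑ i : Fin n, (w i : ℝ) * x i.succ :=
    Finset.sum_nonneg fun i _ => mul_nonneg (by positivity) (hx0 _)
  have hsum_ub : ∑ i : Fin n, (w i : ℝ) * x i.succ + d ≤ (n : ℝ) * W := by
    rw [← hsum1]
    calc ∑ i : Fin n, (w i : ℝ) * x' i.succ ≤ ∑ i : Fin n, (W : ℝ) := by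
          apply Finset.sum_le_sum
          intro i _
          have hwi : (w i : ℝ) ≤ (W : ℝ) := Nat.cast_le.mpr (hw i)
          have h1 : x' i.succ ≤ 1 := (hfeas'.1 i.succ).2.trans (by
            rcases hz01 i.succ with h | h <;> rw [h] <;> norm_num)
          have h2 : 0 ≤ x' i.succ := (hfeas'.1 i.succ).1
          nlinarith
      _ = (n : ℝ) * W := by simp [mul_comm]
  have hs_lb : -(W : ℝ) ≤ s := by
    have h1 : 0 ≤ (W : ℝ) * x 0 := mul_nonneg (by positivity) (hx0 0)
    rw [hs]; linarith
  have hsd_ub : s + d ≤ (n : ℝ) * W := by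
    have h1 : (W : ℝ) * x 0 ≤ W := by
      have := hx1 0; have := hx0 0; nlinarith [Nat.cast_nonneg (α := ℝ) W]
    rw [hs]; linarith
  have hs_ub : s ≤ (n : ℝ) * W := by linarith
  have hkey : d * (s + (s + d)) ≤ 2 * n * (W : ℝ) ^ 2 * δ := by
    rcases le_or_gt (s + (s + d)) 0 with h | h
    · have h1 : d * (s + (s + d)) ≤ 0 := mul_nonpos_of_nonneg_of_nonpos hd0 h
      have h2 : (0:ℝ) ≤ 2 * n * (W : ℝ) ^ 2 * δ := by positivity
      linarith
    · have h1 : d * (s + (s + d)) ≤ ((W : ℝ) * δ) * (2 * ((n : ℝ) * W)) :=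
        mul_le_mul hdW (by linarith) h.le (by positivity)
      nlinarith
  -- expand the optimality inequality
  rw [qpObj, qpObj, h0, hsum1, hsum2, ← hs] at hle
  have hle' : M₁ * s ^ 2 - M₂ * (∑ i : Fin n, x i.succ)
      ≤ M₁ * (s + d) ^ 2 - M₂ * ((∑ i : Fin n, x i.succ) + δ) := by
    have : (W:ℝ) * x 0 + ((∑ i : Fin n, (w i : ℝ) * x i.succ) + (w j:ℝ) * δ) - W
        = s + d := by rw [hs, hd]; ring
    rw [this] at hle
    linarith
  have hM₁key : M₁ * (d * (s + (s + d))) ≤ M₁ * (2 * n * (W : ℝ) ^ 2 * δ) :=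
    mul_le_mul_of_nonneg_left hkey hM₁pos.le
  have hexp : M₁ * (s + d) ^ 2 = M₁ * s ^ 2 + M₁ * (d * (s + (s + d))) := by ring
  have hM₂δ : M₂ * δ = M₁ * (2 * n * (W : ℝ) ^ 2 * δ) + δ := by rw [hM₂]; ring
  linarith
end

section
/- Under the reduction above with M₁ = ∑ᵢ vᵢ + 1, every optimal solution of min over x₀ ∈ [0,1], z ∈ {0,1}ⁿ of M₁(Wx₀ + wᵀz - W)² - vᵀz satisfies Wx₀ + wᵀz - W = 0, i.e., x₀ = 1 - wᵀz/W. -/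
theorem stmt15 (n : ℕ) (v w : Fin n → ℕ) (W : ℕ)
    (hw : ∀ i, w i ≤ W) (hW : W ≤ ∑ i, w i)
    (M₁ : ℝ) (hM₁ : M₁ = (∑ i, (v i : ℝ)) + 1)
    (x₀ : ℝ) (z : Fin n → ℝ)
    (hx₀ : x₀ ∈ Set.Icc (0 : ℝ) 1) (hz : ∀ i, z i = 0 ∨ z i = 1)
    (hopt : ∀ x₀' : ℝ, ∀ z' : Fin n → ℝ, x₀' ∈ Set.Icc (0 : ℝ) 1 → (∀ i, z' i = 0 ∨ z' i = 1) →
      M₁ * ((W : ℝ) * x₀ + (∑ i, (w i : ℝ) * z i) - W) ^ 2 - (∑ i, (v i : ℝ) * z i) ≤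
        M₁ * ((W : ℝ) * x₀' + (∑ i, (w i : ℝ) * z' i) - W) ^ 2 - (∑ i, (v i : ℝ) * z' i)) :
    (W : ℝ) * x₀ + (∑ i, (w i : ℝ) * z i) - W = 0 := by
  obtain ⟨hx0, hx1⟩ := hx₀
  set S := ∑ i, (w i : ℝ) * z i with hS
  set V := ∑ i, (v i : ℝ) * z i with hV
  have hSnn : 0 ≤ S := Finset.sum_nonneg fun i _ => by
    rcases hz i with h | h <;> simp [h]
  have hVle : V ≤ ∑ i, (v i : ℝ) := Finset.sum_le_sum fun i _ => by
    rcases hz i with h | h <;> simp [h]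
  have hM₁pos : 0 < M₁ := by
    rw [hM₁]; positivity
  have h0 : M₁ * ((W : ℝ) * x₀ + S - W) ^ 2 - V ≤ 0 := by
    have := hopt 1 (fun _ => 0) ⟨by norm_num, le_refl 1⟩ (fun i => Or.inl rfl)
    simpa using this
  by_cases hSW : S ≤ (W : ℝ)
  · rcases Nat.eq_zero_or_pos W with hW0 | hWpos
    · have hS0 : S = 0 := le_antisymm (by rw [hW0] at hSW; exact_mod_cast hSW) hSnn
      rw [hS0, hW0]; ring
    · have hWr : (0:ℝ) < W := by exact_mod_cast hWpos
      set x' := ((W : ℝ) - S) / W with hx'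
      have hx'0 : 0 ≤ x' := div_nonneg (by linarith) hWr.le
      have hx'1 : x' ≤ 1 := by
        rw [hx', div_le_one hWr]; linarith
      have hle := hopt x' z ⟨hx'0, hx'1⟩ hz
      have he' : (W : ℝ) * x' + S - W = 0 := by
        rw [hx', mul_comm, div_mul_cancel₀ _ hWr.ne']; ring
      rw [he', ← hV] at hle
      have hle2 : ((W:ℝ)*x₀ + S - W)^2 ≤ 0 := by nlinarith
      exact pow_eq_zero_iff two_ne_zero |>.mp (le_antisymm hle2 (sq_nonneg _))
  · push_neg at hSW
    exfalso
    have hSint : S = ((∑ i, if z i = 1 then w i else 0 : ℕ) : ℝ) := by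
      push_cast
      refine Finset.sum_congr rfl fun i _ => ?_
      rcases hz i with h | h <;> simp [h]
    set m : ℕ := ∑ i, if z i = 1 then w i else 0 with hm
    have hWm : W < m := by
      rw [hSint] at hSW; exact_mod_cast hSW
    have hS1 : (W:ℝ) + 1 ≤ S := by rw [hSint]; exact_mod_cast hWm
    have he1 : 1 ≤ (W : ℝ) * x₀ + S - W := by nlinarith
    have he2 : 1 ≤ ((W:ℝ)*x₀ + S - W)^2 := by nlinarith
    have hq : M₁ ≤ M₁ * ((W:ℝ)*x₀ + S - W)^2 := by
      nlinarith [mul_le_mul_of_nonneg_left he2 hM₁pos.le]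
    linarith
end

section
/- Let g : ℝ → ℝ be convex, differentiable, strongly convex, with g(0) = 0 = min g, and let τ₁, τ₂, λ₁, λ₂ > 0 with τ₁/λ₁ > τ₂/λ₂. Then for all sufficiently small ε > 0: (λ₁+ε)g(τ₁/(λ₁+ε)) + (λ₂-ε)g(τ₂/(λ₂-ε)) < λ₁g(τ₁/λ₁) + λ₂g(τ₂/λ₂). -/
open Set Filter Topology

theorem stmt17 (g : ℝ → ℝ) (hdiff : Differentiable ℝ g)
    (hsc : ∃ α > 0, ConvexOn ℝ Set.univ (fun t => g t - α * t ^ 2))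
    (h0 : g 0 = 0) (hmin : ∀ t, g 0 ≤ g t)
    (τ₁ τ₂ l₁ l₂ : ℝ) (hτ₁ : 0 < τ₁) (hτ₂ : 0 < τ₂) (hl₁ : 0 < l₁) (hl₂ : 0 < l₂)
    (hratio : τ₂ / l₂ < τ₁ / l₁) :
    ∃ δ > 0, ∀ ε : ℝ, 0 < ε → ε < δ →
      (l₁ + ε) * g (τ₁ / (l₁ + ε)) + (l₂ - ε) * g (τ₂ / (l₂ - ε)) <
        l₁ * g (τ₁ / l₁) + l₂ * g (τ₂ / l₂) := by
  obtain ⟨α, hα, hconv⟩ := hsc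
  set s₁ := τ₁ / l₁ with hs₁
  set s₂ := τ₂ / l₂ with hs₂
  have hs₂pos : 0 < s₂ := div_pos hτ₂ hl₂
  have hs₁pos : 0 < s₁ := div_pos hτ₁ hl₁
  have hlt : s₂ < s₁ := hratio
  -- convexity of g
  have hgconv : ConvexOn ℝ Set.univ g := by
    have : ConvexOn ℝ Set.univ (fun t : ℝ => α * t ^ 2) :=
      (Even.convexOn_pow (by norm_num)).smul hα.le
    have := hconv.add this
    refine (congrArg (ConvexOn ℝ Set.univ) ?_).mpr this
    ext t
    simp only [Pi.add_apply]
    ring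
  -- derivative of f := g - α t² at s
  have hfderiv : ∀ s : ℝ, HasDerivAt (fun t => g t - α * t ^ 2)
      (deriv g s - 2 * α * s) s := by
    intro s
    have h1 : HasDerivAt (fun t : ℝ => α * t ^ 2) (2 * α * s) s := by
      have := (hasDerivAt_pow 2 s).const_mul α
      exact this.congr_deriv (by simp; ring)
    exact ((hdiff s).hasDerivAt.sub h1)
  -- strong convexity tangent inequality at s₁ evaluated at s₂
  have hsc' : g s₁ - g s₂ - α * (s₁ ^ 2 - s₂ ^ 2) ≤
      (deriv g s₁ - 2 * α * s₁) * (s₁ - s₂) := by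
    have := hconv.slope_le_of_hasDerivAt (mem_univ s₂) (mem_univ s₁) hlt
      (hfderiv s₁)
    rw [slope_def_field] at this
    have h' := (div_le_iff₀ (by linarith : (0:ℝ) < s₁ - s₂)).mp this
    linarith [h']
  -- monotonicity of deriv g
  have hmono : deriv g s₂ ≤ deriv g s₁ := by
    have h1 := hgconv.le_slope_of_hasDerivAt (mem_univ s₂) (mem_univ s₁) hlt
      (hdiff s₂).hasDerivAt
    have h2 := hgconv.slope_le_of_hasDerivAt (mem_univ s₂) (mem_univ s₁) hlt
      (hdiff s₁).hasDerivAt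
    exact h1.trans h2
  set c : ℝ := (g s₁ - s₁ * deriv g s₁) - (g s₂ - s₂ * deriv g s₂) with hc
  have hcneg : c < 0 := by
    have key : c ≤ s₂ * (deriv g s₂ - deriv g s₁) - α * (s₁ - s₂) ^ 2 := by
      rw [hc]; nlinarith [hsc']
    have h1 : s₂ * (deriv g s₂ - deriv g s₁) ≤ 0 :=
      mul_nonpos_of_nonneg_of_nonpos hs₂pos.le (by linarith)
    have h2 : 0 < α * (s₁ - s₂) ^ 2 := mul_pos hα (pow_pos (by linarith) 2)
    linarith
  -- F and its derivative at 0
  set F : ℝ → ℝ := fun ε => (l₁ + ε) * g (τ₁ / (l₁ + ε)) + (l₂ - ε) * g (τ₂ / (l₂ - ε))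
    with hF
  have hd1 : HasDerivAt (fun ε : ℝ => l₁ + ε) 1 0 := by
    simpa using (hasDerivAt_id (0:ℝ)).const_add l₁
  have hd2 : HasDerivAt (fun ε : ℝ => l₂ - ε) (-1) 0 := by
    simpa using (hasDerivAt_id (0:ℝ)).const_sub l₂
  have hq1 : HasDerivAt (fun ε : ℝ => τ₁ / (l₁ + ε)) (-(τ₁ / l₁ ^ 2)) 0 := by
    have := (hasDerivAt_const (0:ℝ) τ₁).div hd1 (by simpa using hl₁.ne')
    refine this.congr_deriv ?_
    simp only [add_zero, sub_zero]; ring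
  have hq2 : HasDerivAt (fun ε : ℝ => τ₂ / (l₂ - ε)) (τ₂ / l₂ ^ 2) 0 := by
    have := (hasDerivAt_const (0:ℝ) τ₂).div hd2 (by simpa using hl₂.ne')
    refine this.congr_deriv ?_
    simp only [add_zero, sub_zero]; ring
  have hg1 : HasDerivAt (fun ε : ℝ => g (τ₁ / (l₁ + ε)))
      (deriv g s₁ * (-(τ₁ / l₁ ^ 2))) 0 := by
    have := (hdiff _).hasDerivAt.comp 0 hq1
    simpa [hs₁, Function.comp_def] using this
  have hg2 : HasDerivAt (fun ε : ℝ => g (τ₂ / (l₂ - ε)))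
      (deriv g s₂ * (τ₂ / l₂ ^ 2)) 0 := by
    have := (hdiff _).hasDerivAt.comp 0 hq2
    simpa [hs₂, Function.comp_def] using this
  have hFd : HasDerivAt F c 0 := by
    have h1 := hd1.mul hg1
    have h2 := hd2.mul hg2
    have := h1.add h2
    refine this.congr_deriv ?_
    rw [hc, hs₁, hs₂]
    field_simp
    ring
  -- conclude via slope
  have hslope : Tendsto (slope F 0) (𝓝[≠] 0) (𝓝 c) :=
    hasDerivAt_iff_tendsto_slope.mp hFd
  have hev : ∀ᶠ ε in 𝓝[≠] (0:ℝ), slope F 0 ε < 0 :=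
    hslope.eventually (Filter.Tendsto.eventually_lt_const hcneg tendsto_id)
  rw [eventually_nhdsWithin_iff, Metric.eventually_nhds_iff] at hev
  obtain ⟨δ, hδ, hδ'⟩ := hev
  refine ⟨δ, hδ, fun ε hε hεδ => ?_⟩
  have hne : ε ∈ ({0}ᶜ : Set ℝ) := by simpa using hε.ne'
  have hsl : slope F 0 ε < 0 := by
    apply hδ' (by simpa [Real.dist_eq, abs_of_pos hε] using hεδ) hne
  rw [slope_def_field, div_lt_iff₀ (by simpa using hε)] at hsl
  have : F ε < F 0 := by
    have := hsl
    simp only [sub_zero] at this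
    nlinarith [this]
  simpa [hF] using this
end

section
/- Let g : ℝ → ℝ be convex and differentiable with strictly increasing derivative g', and let τ₁, τ₂, λ₁, λ₂ > 0 with τ₁/λ₁ > τ₂/λ₂. Then for all sufficiently small ε > 0: λ₁g((τ₁-ε)/λ₁) + λ₂g((τ₂+ε)/λ₂) < λ₁g(τ₁/λ₁) + λ₂g(τ₂/λ₂). -/
theorem stmt18 (g : ℝ → ℝ) (hg : ConvexOn ℝ Set.univ g) (hdiff : Differentiable ℝ g)
    (hderiv : StrictMono (deriv g))
    (τ₁ τ₂ l₁ l₂ : ℝ) (hτ₁ : 0 < τ₁) (hτ₂ : 0 < τ₂) (hl₁ : 0 < l₁) (hl₂ : 0 < l₂)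
    (hratio : τ₂ / l₂ < τ₁ / l₁) :
    ∃ δ > 0, ∀ ε : ℝ, 0 < ε → ε < δ →
      l₁ * g ((τ₁ - ε) / l₁) + l₂ * g ((τ₂ + ε) / l₂) <
        l₁ * g (τ₁ / l₁) + l₂ * g (τ₂ / l₂) := by
  set r₁ := τ₁ / l₁ with hr₁
  set r₂ := τ₂ / l₂ with hr₂
  have hr : 0 < r₁ - r₂ := sub_pos.2 hratio
  refine ⟨(r₁ - r₂) * l₁ * l₂ / (l₁ + l₂), by positivity, ?_⟩
  intro ε hε hεδ
  have hsum : ε / l₁ + ε / l₂ < r₁ - r₂ := by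
    rw [div_add_div _ _ hl₁.ne' hl₂.ne']
    rw [lt_div_iff₀ (by positivity)] at hεδ
    rw [div_lt_iff₀ (by positivity)]
    nlinarith
  have ha : (τ₁ - ε) / l₁ = r₁ - ε / l₁ := by rw [hr₁]; ring
  have hd : (τ₂ + ε) / l₂ = r₂ + ε / l₂ := by rw [hr₂]; ring
  -- MVT on [r₁ - ε/l₁, r₁]
  have h1 : r₁ - ε / l₁ < r₁ := by
    have : 0 < ε / l₁ := by positivity
    linarith
  have h2 : r₂ < r₂ + ε / l₂ := by
    have : 0 < ε / l₂ := by positivity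
    linarith
  obtain ⟨x, hx, hxd⟩ := exists_hasDerivAt_eq_slope g (deriv g) h1
    (hdiff.continuous.continuousOn) (fun y _ => (hdiff y).hasDerivAt)
  obtain ⟨y, hy, hyd⟩ := exists_hasDerivAt_eq_slope g (deriv g) h2
    (hdiff.continuous.continuousOn) (fun y _ => (hdiff y).hasDerivAt)
  have hyx : y < x := by
    have : r₂ + ε / l₂ < r₁ - ε / l₁ := by linarith
    have := hy.2
    have := hx.1
    linarith
  have hlt : deriv g y < deriv g x := hderiv hyx
  rw [hxd, hyd] at hlt
  have e1 : r₁ - (r₁ - ε / l₁) = ε / l₁ := by ring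
  have e2 : r₂ + ε / l₂ - r₂ = ε / l₂ := by ring
  rw [e1, e2] at hlt
  set A := g (r₂ + ε / l₂) - g r₂ with hA
  set B := g r₁ - g (r₁ - ε / l₁) with hB
  rw [div_div_eq_mul_div, div_div_eq_mul_div, div_lt_div_iff₀ hε hε,
    mul_comm, mul_assoc] at hlt
  have key : l₂ * A < l₁ * B := lt_of_mul_lt_mul_left (by linear_combination hlt) hε.le
  rw [ha, hd]
  rw [hA, hB] at key
  linarith
end
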